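/- arXiv:2012.14947 — 7 statements merged into one kernel-verified Lean document; each statement's English description precedes it below -/
import Mathlib

section
/- Fix ℓ ≥ 1 and ℓ-tuples of nonnegative integers α, β. For every m ≥ 1 and n ≥ 0, M^ℓ_{n,m}(α,β) = Σ_{i+j = n-1} M^ℓ_{i,0}(α,β) · M^ℓ_{j,m-1}(β,β), i.e., the generating function identity M^ℓ_m(α,β,t) = t · M^ℓ_0(α,β,t) · M^ℓ_{m-1}(β,β,t) holds. -/
open Finset PowerSeries

/-- The validity condition for a single step `(s, c)` (vertical displacement `s`, color `c`)
of an `(α,β)`-colored order-`ℓ` Motzkin path, where `h` is the height at which the step ends.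
Up steps `s = 1` and maximal down steps `D_ℓ` are uncolored (color `0`); a down step
`D_d = (1,-d)` with `d < ℓ` gets one of `α d` colors if it ends at height `0` and one of
`β d` colors if it ends at positive height. -/
def MotzkinStepOK (ℓ : ℕ) (α β : ℕ → ℕ) (s : ℤ) (c : ℕ) (h : ℤ) : Prop :=
  (s = 1 ∧ c = 0) ∨
  ∃ d : ℕ, d ≤ ℓ ∧ s = -(d : ℤ) ∧
    (if d = ℓ then c = 0 else c < (if h = 0 then α d else β d))

/-- The set of `(α,β)`-colored order-`ℓ` Motzkin paths of length `n` and height `m`,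
encoded as lists of (displacement, color) pairs.  The path stays weakly above `y = 0`. -/
def ColoredMotzkinSet (ℓ : ℕ) (α β : ℕ → ℕ) (n m : ℕ) : Set (List (ℤ × ℕ)) :=
  {L | L.length = n ∧ (L.map Prod.fst).sum = (m : ℤ) ∧
    ∀ i < n, 0 ≤ ((L.take (i + 1)).map Prod.fst).sum ∧
      MotzkinStepOK ℓ α β (L.getD i (0, 0)).1 (L.getD i (0, 0)).2
        (((L.take (i + 1)).map Prod.fst).sum)}

/-- `M ℓ α β n m` is the number of `(α,β)`-colored order-`ℓ` Motzkin paths of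
length `n` and height `m`. -/
noncomputable def M (ℓ : ℕ) (α β : ℕ → ℕ) (n m : ℕ) : ℕ :=
  Nat.card (ColoredMotzkinSet ℓ α β n m)

namespace MotzkinAux

/-- The height of the path `L` after `i` steps. -/
def pref (L : List (ℤ × ℕ)) (i : ℕ) : ℤ := ((L.take i).map Prod.fst).sum

lemma pref_zero (L : List (ℤ × ℕ)) : pref L 0 = 0 := rfl

lemma pref_of_le {L : List (ℤ × ℕ)} {i : ℕ} (h : L.length ≤ i) :
    pref L i = (L.map Prod.fst).sum := by
  rw [pref, List.take_of_length_le h]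

lemma pref_append (P Q : List (ℤ × ℕ)) (i : ℕ) :
    pref (P ++ Q) i = pref P i + pref Q (i - P.length) := by
  simp [pref, List.take_append]

lemma pref_cons (a : ℤ × ℕ) (Q : List (ℤ × ℕ)) (j : ℕ) :
    pref (a :: Q) (j + 1) = a.1 + pref Q j := by
  simp [pref, List.take_succ_cons]

lemma pref_succ {L : List (ℤ × ℕ)} {k : ℕ} (h : k < L.length) :
    pref L (k + 1) = pref L k + (L.getD k (0, 0)).1 := by
  rw [pref, pref, List.map_take, List.map_take,
    List.sum_take_succ _ _ (by simpa using h), List.getD_eq_getElem _ _ h,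
    List.getElem_map]

lemma pref_take {L : List (ℤ × ℕ)} {k j : ℕ} (h : j ≤ k) :
    pref (L.take k) j = pref L j := by
  rw [pref, pref, List.take_take, min_eq_left h]

lemma pref_drop (L : List (ℤ × ℕ)) (k j : ℕ) :
    pref L (k + j) = pref L k + pref (L.drop k) j := by
  simp [pref, List.take_add]

lemma getD_take {L : List (ℤ × ℕ)} {k j : ℕ} (h : j < k) (d : ℤ × ℕ) :
    (L.take k).getD j d = L.getD j d := by
  simp [List.getD_eq_getElem?_getD, List.getElem?_take, h]

lemma getD_drop (L : List (ℤ × ℕ)) (k j : ℕ) (d : ℤ × ℕ) :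
    (L.drop k).getD j d = L.getD (k + j) d := by
  simp [List.getD_eq_getElem?_getD, List.getElem?_drop]

lemma mem_def {ℓ : ℕ} {α β : ℕ → ℕ} {n m : ℕ} {L : List (ℤ × ℕ)} :
    L ∈ ColoredMotzkinSet ℓ α β n m ↔
      L.length = n ∧ (L.map Prod.fst).sum = (m : ℤ) ∧
      ∀ i < n, 0 ≤ pref L (i + 1) ∧
        MotzkinStepOK ℓ α β (L.getD i (0, 0)).1 (L.getD i (0, 0)).2 (pref L (i + 1)) :=
  Iff.rfl

lemma pref_nonneg {ℓ : ℕ} {α β : ℕ → ℕ} {n m : ℕ} {L : List (ℤ × ℕ)}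
    (hL : L ∈ ColoredMotzkinSet ℓ α β n m) (j : ℕ) : 0 ≤ pref L j := by
  obtain ⟨h1, h2, h3⟩ := hL
  rcases j with _ | i
  · simp [pref]
  · rcases lt_or_ge i n with h | h
    · exact (h3 i h).1
    · rw [pref_of_le (by omega), h2]
      exact Int.natCast_nonneg m

lemma stepOK_of_beta {ℓ : ℕ} {α β : ℕ → ℕ} {s : ℤ} {c : ℕ} {h h' : ℤ}
    (hOK : MotzkinStepOK ℓ β β s c h) (hpos : h' ≠ 0) : MotzkinStepOK ℓ α β s c h' := by
  rcases hOK with h1 | ⟨d, hd, hs, hc⟩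
  · exact Or.inl h1
  · refine Or.inr ⟨d, hd, hs, ?_⟩
    by_cases hdl : d = ℓ
    · simpa [hdl] using hc
    · rw [if_neg hdl] at hc ⊢
      rw [if_neg hpos]
      rwa [ite_self] at hc

lemma stepOK_to_beta {ℓ : ℕ} {α β : ℕ → ℕ} {s : ℤ} {c : ℕ} {h h' : ℤ}
    (hOK : MotzkinStepOK ℓ α β s c h) (hpos : h ≠ 0) : MotzkinStepOK ℓ β β s c h' := by
  rcases hOK with h1 | ⟨d, hd, hs, hc⟩
  · exact Or.inl h1
  · refine Or.inr ⟨d, hd, hs, ?_⟩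
    by_cases hdl : d = ℓ
    · simpa [hdl] using hc
    · rw [if_neg hdl] at hc ⊢
      rw [if_neg hpos] at hc
      rw [ite_self]
      exact hc

lemma finite_listSet {X : Type*} {T : Set X} (hT : T.Finite) (n : ℕ) :
    {l : List X | l.length = n ∧ ∀ x ∈ l, x ∈ T}.Finite := by
  induction n with
  | zero =>
    refine Set.Finite.subset (Set.finite_singleton ([] : List X)) ?_
    rintro l ⟨hl, -⟩
    simpa [List.length_eq_zero_iff] using hl
  | succ n ih =>
    refine Set.Finite.subset ((hT.prod ih).image (fun p : X × List X => p.1 :: p.2)) ?_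
    rintro l ⟨hl, hx⟩
    cases l with
    | nil => simp at hl
    | cons a l =>
      exact ⟨(a, l), ⟨hx a (by simp), by simpa using hl,
        fun x hx' => hx x (by simp [hx'])⟩, rfl⟩

lemma motzkin_finite (ℓ : ℕ) (α β : ℕ → ℕ) (n m : ℕ) :
    (ColoredMotzkinSet ℓ α β n m).Finite := by
  classical
  set B := (Finset.range (ℓ + 1)).sup (fun d => max (α d) (β d)) with hB
  refine Set.Finite.subset
    (finite_listSet (T := (Set.Icc (-(ℓ : ℤ)) 1) ×ˢ (Set.Iio (B + 1)))
      (((Set.finite_Icc _ _).prod (Set.finite_Iio _))) n) ?_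
  rintro L ⟨h1, h2, h3⟩
  refine ⟨h1, fun x hx => ?_⟩
  obtain ⟨i, hi, rfl⟩ := List.mem_iff_getElem.mp hx
  have hOK := (h3 i (h1 ▸ hi)).2
  rw [List.getD_eq_getElem _ _ hi] at hOK
  rcases hOK with ⟨hs, hc⟩ | ⟨d, hd, hs, hc⟩
  · constructor
    · constructor
      · rw [hs]; have : (0 : ℤ) ≤ (ℓ : ℤ) := Int.natCast_nonneg ℓ; omega
      · rw [hs]
    · simp [hc]
  · constructor
    · constructor
      · rw [hs]
        have : (d : ℤ) ≤ (ℓ : ℤ) := by exact_mod_cast hd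
        omega
      · rw [hs]
        have : (0 : ℤ) ≤ (d : ℤ) := Int.natCast_nonneg d
        omega
    · by_cases hdl : d = ℓ
      · rw [if_pos hdl] at hc
        simp [hc]
      · rw [if_neg hdl] at hc
        have hdm : d ∈ Finset.range (ℓ + 1) := Finset.mem_range.mpr (by omega)
        have hs1 : α d ≤ B := le_trans (le_max_left _ _) (Finset.le_sup (f := fun d => max (α d) (β d)) hdm)
        have hs2 : β d ≤ B := le_trans (le_max_right _ _) (Finset.le_sup (f := fun d => max (α d) (β d)) hdm)
        have : L[i].2 < B + 1 := by split at hc <;> omega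
        exact this

end MotzkinAux

open MotzkinAux

/-- Concatenation of a height-0 path, an up step, and a shifted path is a valid path. -/
lemma motzkin_mem_concat {ℓ : ℕ} {α β : ℕ → ℕ} {m n i : ℕ} (hm : 1 ≤ m) (hi : i < n)
    {P Q : List (ℤ × ℕ)}
    (hP : P ∈ ColoredMotzkinSet ℓ α β i 0)
    (hQ : Q ∈ ColoredMotzkinSet ℓ β β (n - 1 - i) (m - 1)) :
    P ++ (1, 0) :: Q ∈ ColoredMotzkinSet ℓ α β n m := by
  obtain ⟨hPl, hPs, hPc⟩ := hP
  obtain ⟨hQl, hQs, hQc⟩ := hQ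
  have hQnn : ∀ j, 0 ≤ pref Q j := pref_nonneg ⟨hQl, hQs, hQc⟩
  have hlen : (P ++ (1, 0) :: Q).length = n := by
    simp [hPl, hQl]; omega
  have hprefP : ∀ k, i ≤ k → pref P k = 0 := by
    intro k hk
    rw [pref_of_le (by omega), hPs]; rfl
  have hpref : ∀ k, pref (P ++ (1, 0) :: Q) k = pref P k + pref ((1, 0) :: Q) (k - i) := by
    intro k; rw [pref_append, hPl]
  refine ⟨hlen, ?_, ?_⟩
  · have : (((P ++ (1, 0) :: Q).map Prod.fst).sum) = (P.map Prod.fst).sum + (1 + (Q.map Prod.fst).sum) := by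
      simp
    rw [this, hPs, hQs]
    have : ((m - 1 : ℕ) : ℤ) = (m : ℤ) - 1 := by omega
    omega
  · intro k hk
    rcases lt_trichotomy k i with hki | hki | hki
    · have e1 : pref (P ++ (1, 0) :: Q) (k + 1) = pref P (k + 1) := by
        rw [hpref]
        have : k + 1 - i = 0 := by omega
        rw [this, pref_zero, add_zero]
      have e2 : (P ++ (1, 0) :: Q).getD k (0, 0) = P.getD k (0, 0) :=
        List.getD_append _ _ _ _ (by omega)
      rw [show ((((P ++ (1,0) :: Q).take (k+1)).map Prod.fst).sum) = pref (P ++ (1,0) :: Q) (k+1) from rfl, e1, e2]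
      exact hPc k hki
    · subst hki
      have e1 : pref (P ++ (1, 0) :: Q) (k + 1) = 1 := by
        rw [hpref]
        have h0 : k + 1 - k = 1 := by omega
        rw [h0, hprefP _ (by omega), pref_cons]
        simp [pref_zero]
      have e2 : (P ++ (1, 0) :: Q).getD k (0, 0) = (1, 0) := by
        rw [List.getD_append_right _ _ _ _ (by omega), hPl, Nat.sub_self]
        rfl
      rw [show ((((P ++ (1,0) :: Q).take (k+1)).map Prod.fst).sum) = pref (P ++ (1,0) :: Q) (k+1) from rfl, e1, e2]
      exact ⟨by norm_num, Or.inl ⟨rfl, rfl⟩⟩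
    · set j := k - i - 1 with hj
      have hjlt : j < n - 1 - i := by omega
      have e1 : pref (P ++ (1, 0) :: Q) (k + 1) = 1 + pref Q (j + 1) := by
        rw [hpref, hprefP _ (by omega)]
        have : k + 1 - i = (j + 1) + 1 := by omega
        rw [this, pref_cons]
        simp
      have e2 : (P ++ (1, 0) :: Q).getD k (0, 0) = Q.getD j (0, 0) := by
        rw [List.getD_append_right _ _ _ _ (by omega), hPl]
        have : k - i = j + 1 := by omega
        rw [this]
        rfl
      obtain ⟨hc1, hc2⟩ := hQc j hjlt
      have hc1' : 0 ≤ pref Q (j + 1) := hc1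
      have hc2' : MotzkinStepOK ℓ β β (Q.getD j (0, 0)).1 (Q.getD j (0, 0)).2 (pref Q (j + 1)) := hc2
      rw [show ((((P ++ (1,0) :: Q).take (k+1)).map Prod.fst).sum) = pref (P ++ (1,0) :: Q) (k+1) from rfl, e1, e2]
      exact ⟨by omega, stepOK_of_beta hc2' (by omega)⟩

/-- Every nonempty-height path decomposes uniquely. -/
lemma motzkin_exists_decomp {ℓ : ℕ} {α β : ℕ → ℕ} {m n : ℕ} (hm : 1 ≤ m)
    {L : List (ℤ × ℕ)} (hL : L ∈ ColoredMotzkinSet ℓ α β n m) :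
    ∃ i < n, ∃ P ∈ ColoredMotzkinSet ℓ α β i 0,
      ∃ Q ∈ ColoredMotzkinSet ℓ β β (n - 1 - i) (m - 1), L = P ++ (1, 0) :: Q := by
  classical
  obtain ⟨h1, h2, h3⟩ := hL
  have hnn : ∀ j, 0 ≤ pref L j := pref_nonneg ⟨h1, h2, h3⟩
  have h3' : ∀ i < n, 0 ≤ pref L (i + 1) ∧
      MotzkinStepOK ℓ α β (L.getD i (0, 0)).1 (L.getD i (0, 0)).2 (pref L (i + 1)) := h3
  set Z := (Finset.range (n + 1)).filter (fun k => pref L k = 0) with hZ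
  have h0Z : 0 ∈ Z := by
    simp [hZ, pref_zero]
  set k := Z.max' ⟨0, h0Z⟩ with hk
  have hkZ : k ∈ Z := Z.max'_mem _
  have hk0 : pref L k = 0 := (Finset.mem_filter.mp hkZ).2
  have hkn' : k ≤ n := by
    have := Finset.mem_range.mp (Finset.mem_filter.mp hkZ).1; omega
  have hprefn : pref L n = (m : ℤ) := by rw [pref_of_le (by omega), h2]
  have hkn : k < n := by
    rcases Nat.lt_or_ge k n with h | h
    · exact h
    · exfalso
      have : k = n := by omega
      rw [this, hprefn] at hk0
      omega
  have hmax : ∀ j, k < j → j ≤ n → 1 ≤ pref L j := by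
    intro j hkj hjn
    have hne : pref L j ≠ 0 := by
      intro h0
      have : j ∈ Z := Finset.mem_filter.mpr ⟨Finset.mem_range.mpr (by omega), h0⟩
      have := Z.le_max' j this
      omega
    have := hnn j
    omega
  have hkl : k < L.length := by omega
  have hstep : pref L (k + 1) = pref L k + (L.getD k (0, 0)).1 := pref_succ hkl
  have h1k : 1 ≤ pref L (k + 1) := hmax (k + 1) (by omega) (by omega)
  have hOK := (h3' k hkn).2
  have hgetd : L.getD k (0, 0) = (1, 0) := by
    rcases hOK with ⟨hs, hc⟩ | ⟨d, hd, hs, hc⟩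
    · exact Prod.ext hs hc
    · exfalso
      have : (0 : ℤ) ≤ (d : ℤ) := Int.natCast_nonneg d
      omega
  have hLsplit : L = L.take k ++ (1, 0) :: L.drop (k + 1) := by
    conv_lhs => rw [← List.take_append_drop k L]
    rw [List.drop_eq_getElem_cons hkl, ← List.getD_eq_getElem L (0, 0) hkl, hgetd]
  have hpref1 : pref L (k + 1) = 1 := by
    rw [hstep, hk0, hgetd]; rfl
  refine ⟨k, hkn, L.take k, ⟨?_, ?_, ?_⟩, L.drop (k + 1), ⟨?_, ?_, ?_⟩, hLsplit⟩
  · simp [List.length_take]; omega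
  · show ((L.take k).map Prod.fst).sum = ((0 : ℕ) : ℤ)
    rw [show ((L.take k).map Prod.fst).sum = pref L k from rfl, hk0]; rfl
  · intro j hj
    have e1 : pref (L.take k) (j + 1) = pref L (j + 1) := pref_take (by omega)
    have e2 : (L.take k).getD j (0, 0) = L.getD j (0, 0) := getD_take (by omega) _
    rw [show (((L.take k).take (j+1)).map Prod.fst).sum = pref (L.take k) (j+1) from rfl, e1, e2]
    exact h3' j (by omega)
  · simp [List.length_drop]; omega
  · show ((L.drop (k + 1)).map Prod.fst).sum = ((m - 1 : ℕ) : ℤ)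
    have := pref_drop L (k + 1) (n - (k + 1))
    rw [show k + 1 + (n - (k + 1)) = n from by omega] at this
    have hfull : pref (L.drop (k + 1)) (n - (k + 1)) = ((L.drop (k + 1)).map Prod.fst).sum :=
      pref_of_le (by simp [List.length_drop]; omega)
    rw [hprefn, hpref1, hfull] at this
    omega
  · intro j hj
    have e1 : pref (L.drop (k + 1)) (j + 1) = pref L (k + 1 + (j + 1)) - 1 := by
      have := pref_drop L (k + 1) (j + 1)
      rw [hpref1] at this
      omega
    have e2 : (L.drop (k + 1)).getD j (0, 0) = L.getD (k + 1 + j) (0, 0) := getD_drop _ _ _ _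
    have hlt : k + 1 + j < n := by omega
    obtain ⟨hc1, hc2⟩ := h3' (k + 1 + j) hlt
    have h1j : 1 ≤ pref L (k + 1 + (j + 1)) := hmax _ (by omega) (by omega)
    rw [show (((L.drop (k+1)).take (j+1)).map Prod.fst).sum = pref (L.drop (k+1)) (j+1) from rfl, e1, e2]
    constructor
    · omega
    · have : k + 1 + j + 1 = k + 1 + (j + 1) := by omega
      rw [this] at hc2
      exact stepOK_to_beta hc2 (by omega)

/-- The decomposition point is unique. -/
lemma motzkin_concat_inj {ℓ : ℕ} {α β : ℕ → ℕ} {m n i i' : ℕ}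
    {P Q P' Q' : List (ℤ × ℕ)}
    (hP : P ∈ ColoredMotzkinSet ℓ α β i 0)
    (hQ : Q ∈ ColoredMotzkinSet ℓ β β (n - 1 - i) (m - 1))
    (hP' : P' ∈ ColoredMotzkinSet ℓ α β i' 0)
    (hQ' : Q' ∈ ColoredMotzkinSet ℓ β β (n - 1 - i') (m - 1))
    (heq : P ++ (1, 0) :: Q = P' ++ (1, 0) :: Q') : i = i' ∧ P = P' ∧ Q = Q' := by
  have key : ∀ (a : ℕ) (R S : List (ℤ × ℕ)), R ∈ ColoredMotzkinSet ℓ α β a 0 →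
      S ∈ ColoredMotzkinSet ℓ β β (n - 1 - a) (m - 1) →
      pref (R ++ (1, 0) :: S) a = 0 ∧ ∀ j, a < j → 1 ≤ pref (R ++ (1, 0) :: S) j := by
    intro a R S hR hS
    obtain ⟨hRl, hRs, _⟩ := hR
    have hSnn : ∀ j, 0 ≤ pref S j := pref_nonneg hS
    have hRp : ∀ k, a ≤ k → pref R k = 0 := by
      intro k hk; rw [pref_of_le (by omega), hRs]; rfl
    constructor
    · rw [pref_append, hRl, Nat.sub_self, pref_zero, add_zero]
      rw [pref, List.take_of_length_le (by omega), hRs]; rfl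
    · intro j hj
      rw [pref_append, hRl, hRp j (by omega)]
      have : j - a = (j - a - 1) + 1 := by omega
      rw [this, pref_cons]
      have := hSnn (j - a - 1)
      simp only [zero_add]
      omega
  obtain ⟨hz, hpos⟩ := key i P Q hP hQ
  obtain ⟨hz', hpos'⟩ := key i' P' Q' hP' hQ'
  have hii' : i = i' := by
    by_contra hne
    rcases Nat.lt_or_ge i i' with h | h
    · have := hpos' i'
      have h1 := hpos i' h
      rw [heq] at h1
      omega
    · have h' : i' < i := by omega
      have h1 := hpos' i h'
      rw [← heq] at h1
      omega
  subst hii'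
  have hlen : P.length = P'.length := by
    obtain ⟨hPl, _, _⟩ := hP
    obtain ⟨hP'l, _, _⟩ := hP'
    rw [hPl, hP'l]
  obtain ⟨hPP, hQQ⟩ := List.append_inj heq hlen
  exact ⟨rfl, hPP, List.cons_injective hQQ⟩

lemma nat_card_sigma {n : ℕ} (f : Fin n → Type*) (hf : ∀ i, Finite (f i)) :
    Nat.card (Σ i, f i) = ∑ i : Fin n, Nat.card (f i) := by
  haveI := hf
  haveI : ∀ i, Fintype (f i) := fun i => Fintype.ofFinite _
  simp [Nat.card_eq_fintype_card, Fintype.card_sigma]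

/-- Height-`m` colored Motzkin paths decompose as a height-`0` path followed by a
height-`(m-1)` path: the convolution identity `M_m(α,β,t) = t·M_0(α,β,t)·M_{m-1}(β,β,t)`. -/
theorem motzkin_column_convolution (ℓ : ℕ) (hℓ : 1 ≤ ℓ) (α β : ℕ → ℕ)
    (m : ℕ) (hm : 1 ≤ m) (n : ℕ) :
    M ℓ α β n m =
      ∑ i ∈ Finset.range n, M ℓ α β i 0 * M ℓ β β (n - 1 - i) (m - 1) := by
  classical
  set A : Fin n → Set (List (ℤ × ℕ)) := fun i => ColoredMotzkinSet ℓ α β i 0 with hA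
  set B : Fin n → Set (List (ℤ × ℕ)) := fun i => ColoredMotzkinSet ℓ β β (n - 1 - i) (m - 1) with hB
  let g : (Σ i : Fin n, (A i × B i)) → (ColoredMotzkinSet ℓ α β n m) :=
    fun x => ⟨x.2.1.1 ++ (1, 0) :: x.2.2.1, motzkin_mem_concat hm x.1.2 x.2.1.2 x.2.2.2⟩
  have hbij : Function.Bijective g := by
    constructor
    · rintro ⟨i, ⟨P, hP⟩, ⟨Q, hQ⟩⟩ ⟨i', ⟨P', hP'⟩, ⟨Q', hQ'⟩⟩ h
      have heq : P ++ (1, 0) :: Q = P' ++ (1, 0) :: Q' := congrArg Subtype.val h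
      obtain ⟨h1, h2, h3⟩ := motzkin_concat_inj hP hQ hP' hQ' heq
      have : i = i' := Fin.ext h1
      subst this; subst h2; subst h3
      rfl
    · rintro ⟨L, hL⟩
      obtain ⟨i, hi, P, hP, Q, hQ, hsplit⟩ := motzkin_exists_decomp hm hL
      exact ⟨⟨⟨i, hi⟩, ⟨P, hP⟩, ⟨Q, hQ⟩⟩, Subtype.ext hsplit.symm⟩
  have hcard := Nat.card_eq_of_bijective g hbij
  have hfin : ∀ i : Fin n, Finite (A i × B i) := by
    intro i
    haveI := (motzkin_finite ℓ α β i 0).to_subtype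
    haveI := (motzkin_finite ℓ β β (n - 1 - (i : ℕ)) (m - 1)).to_subtype
    infer_instance
  rw [M, ← hcard, nat_card_sigma _ hfin]
  rw [← Fin.sum_univ_eq_sum_range (fun i => M ℓ α β i 0 * M ℓ β β (n - 1 - i) (m - 1)) n]
  refine Finset.sum_congr rfl fun i _ => ?_
  rw [Nat.card_prod]
  rfl
end

section
/- Fix ℓ ≥ 1 and ℓ-tuples of nonnegative integers α, β. For every m ≥ 1 and n ≥ 0, the number of (α,β)-colored order-ℓ Motzkin paths of length n and height m equals the coefficient of t^n in t^m · M^ℓ_0(α,β,t) · (M^ℓ_0(β,β,t))^m, where M^ℓ_0(γ,δ,t) is the generating function for (γ,δ)-colored order-ℓ Motzkin paths of height 0. -/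
open Finset PowerSeries

/-!
Up steps have size one, so a path of height `m + 1` crosses from height `m` to `m + 1` by an
up step, and there is a last such step. Cutting the path there leaves a path of height `m` in
front and, behind, a path that never returns to height `≤ m`; shifted down by `m + 1`, the
latter is a `(β,β)`-colored path of height `0`, because above height `0` only `β`-colors occur.
This decomposition is bijective, so `M_{k+1,m+1} = ∑_{a+b=k} M_{a,m} · M^{ββ}_{b,0}`: the
generating function of height `m + 1` is `t · M_0(β,β,t)` times that of height `m`.
-/

namespace ColoredMotzkin

variable {ℓ : ℕ} {α β : ℕ → ℕ}

def height (L : List (ℤ × ℕ)) (k : ℕ) : ℤ := ((L.take k).map Prod.fst).sum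

/-- Membership in `ColoredMotzkinSet` in recursive form: the colors are read off the absolute
height, and the walk starts at height `h`. -/
def ValidFrom (ℓ : ℕ) (α β : ℕ → ℕ) : ℤ → List (ℤ × ℕ) → Prop
  | _, [] => True
  | h, (s, c) :: L => 0 ≤ h + s ∧ MotzkinStepOK ℓ α β s c (h + s) ∧ ValidFrom ℓ α β (h + s) L

@[simp]
lemma height_zero (L : List (ℤ × ℕ)) : height L 0 = 0 := by simp [height]

@[simp]
lemma height_cons_succ (x : ℤ × ℕ) (L : List (ℤ × ℕ)) (k : ℕ) :
    height (x :: L) (k + 1) = x.1 + height L k := by simp [height]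

lemma height_of_length_le {L : List (ℤ × ℕ)} {k : ℕ} (hk : L.length ≤ k) :
    height L k = (L.map Prod.fst).sum := by simp [height, List.take_of_length_le hk]

lemma height_append (Q R : List (ℤ × ℕ)) (k : ℕ) :
    height (Q ++ R) (Q.length + k) = (Q.map Prod.fst).sum + height R k := by
  simp [height, List.take_add]

lemma forall_lt_iff_validFrom (L : List (ℤ × ℕ)) (h : ℤ) :
    (∀ i < L.length, 0 ≤ h + height L (i + 1) ∧
      MotzkinStepOK ℓ α β (L.getD i (0, 0)).1 (L.getD i (0, 0)).2 (h + height L (i + 1))) ↔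
      ValidFrom ℓ α β h L := by
  induction L generalizing h with
  | nil => simp [ValidFrom]
  | cons x L ih =>
    obtain ⟨s, c⟩ := x
    simp only [List.length_cons, Nat.forall_lt_succ_left, height_cons_succ, height_zero,
      List.getD_cons_zero, List.getD_cons_succ, add_zero, ← add_assoc, ih, ValidFrom, and_assoc]

lemma mem_coloredMotzkinSet_iff {L : List (ℤ × ℕ)} {n m : ℕ} :
    L ∈ ColoredMotzkinSet ℓ α β n m ↔
      L.length = n ∧ (L.map Prod.fst).sum = m ∧ ValidFrom ℓ α β 0 L := by
  rw [← forall_lt_iff_validFrom]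
  simp only [ColoredMotzkinSet, Set.mem_ofPred_eq, zero_add, height]
  exact and_congr_right fun hlen => by rw [hlen]

lemma validFrom_append (Q R : List (ℤ × ℕ)) (h : ℤ) :
    ValidFrom ℓ α β h (Q ++ R) ↔
      ValidFrom ℓ α β h Q ∧ ValidFrom ℓ α β (h + (Q.map Prod.fst).sum) R := by
  induction Q generalizing h with
  | nil => simp [ValidFrom]
  | cons x Q ih =>
    obtain ⟨s, c⟩ := x
    simp only [List.cons_append, ValidFrom, ih, List.map_cons, List.sum_cons, add_assoc, and_assoc]

lemma motzkinStepOK_congr {s : ℤ} {c : ℕ} {h : ℤ} (hh : h ≠ 0) (h' : ℤ) :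
    MotzkinStepOK ℓ α β s c h ↔ MotzkinStepOK ℓ β β s c h' := by
  simp only [MotzkinStepOK, if_neg hh, ite_self]

lemma eq_up_of_motzkinStepOK {s : ℤ} {c : ℕ} {h : ℤ} (hOK : MotzkinStepOK ℓ α β s c h)
    (hs : 0 < s) : (s, c) = (1, 0) := by
  rcases hOK with ⟨rfl, rfl⟩ | ⟨d, -, rfl, -⟩
  · rfl
  · omega

/-- Lifting by `d > 0` keeps the walk above height `0`, where `α`- and `β`-colors agree. -/
lemma validFrom_iff_add {P : List (ℤ × ℕ)} {h d : ℤ} (hh : 0 ≤ h) (hd : 0 < d) :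
    ValidFrom ℓ β β h P ↔ ValidFrom ℓ α β (h + d) P ∧ ∀ k, 0 ≤ h + height P k := by
  induction P generalizing h with
  | nil => simpa [ValidFrom, height] using hh
  | cons x P ih =>
    obtain ⟨s, c⟩ := x
    have hforall : (∀ k, 0 ≤ h + height ((s, c) :: P) k) ↔
        0 ≤ h ∧ ∀ k, 0 ≤ h + s + height P k := by
      rw [← Nat.and_forall_add_one]
      simp only [height_zero, add_zero, height_cons_succ, add_assoc]
    simp only [ValidFrom, hforall, add_right_comm h d s]
    constructor
    · rintro ⟨hs, hOK, hP⟩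
      have hP' := (ih hs).1 hP
      exact ⟨⟨by omega, (motzkinStepOK_congr (by omega) _).2 hOK, hP'.1⟩, hh, hP'.2⟩
    · rintro ⟨⟨-, hOK, hP⟩, -, hk⟩
      have hs : 0 ≤ h + s := by simpa using hk 0
      exact ⟨hs, (motzkinStepOK_congr (by omega) _).1 hOK, (ih hs).2 ⟨hP, hk⟩⟩

lemma motzkinStepOK_mem {s : ℤ} {c : ℕ} {h : ℤ} (hOK : MotzkinStepOK ℓ α β s c h) :
    (s, c) ∈ Set.Icc (-(ℓ : ℤ)) 1 ×ˢ Set.Iic (∑ d ∈ range ℓ, (α d + β d)) := by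
  rcases hOK with ⟨rfl, rfl⟩ | ⟨d, hdℓ, rfl, hc⟩
  · simp
  · refine ⟨by simp; omega, Set.mem_Iic.2 ?_⟩
    by_cases hd : d = ℓ
    · simp only [hd, if_true] at hc
      omega
    have hle : α d + β d ≤ ∑ d ∈ range ℓ, (α d + β d) :=
      single_le_sum (f := fun d => α d + β d) (fun _ _ => Nat.zero_le _) (mem_range.2 (by omega))
    split_ifs at hc <;> omega

lemma exists_motzkinStepOK_of_validFrom {L : List (ℤ × ℕ)} {h : ℤ}
    (hL : ValidFrom ℓ α β h L) {x : ℤ × ℕ} (hx : x ∈ L) : ∃ h', MotzkinStepOK ℓ α β x.1 x.2 h' := by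
  induction L generalizing h with
  | nil => simp at hx
  | cons y L ih =>
    obtain ⟨s, c⟩ := y
    rcases List.mem_cons.1 hx with rfl | hx
    · exact ⟨_, hL.2.1⟩
    · exact ih hL.2.2 hx

lemma finite_coloredMotzkinSet (ℓ : ℕ) (α β : ℕ → ℕ) (n m : ℕ) :
    (ColoredMotzkinSet ℓ α β n m).Finite := by
  set B := Set.Icc (-(ℓ : ℤ)) 1 ×ˢ Set.Iic (∑ d ∈ range ℓ, (α d + β d))
  have : Finite B := ((Set.finite_Icc _ _).prod (Set.finite_Iic _)).to_subtype
  refine ((List.finite_length_eq B n).image (List.map Subtype.val)).subset ?_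
  intro L hL
  obtain ⟨rfl, -, hvalid⟩ := mem_coloredMotzkinSet_iff.1 hL
  have hB : ∀ x ∈ L, x ∈ B := fun x hx =>
    (exists_motzkinStepOK_of_validFrom hvalid hx).elim fun _ hOK => motzkinStepOK_mem hOK
  lift L to List B using hB
  exact ⟨L, by simp, rfl⟩

instance (ℓ : ℕ) (α β : ℕ → ℕ) (n m : ℕ) : Finite (ColoredMotzkinSet ℓ α β n m) :=
  (finite_coloredMotzkinSet ℓ α β n m).to_subtype

lemma M_zero_succ (ℓ : ℕ) (α β : ℕ → ℕ) (m : ℕ) : M ℓ α β 0 (m + 1) = 0 := by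
  rw [M, Nat.card_eq_zero]
  left
  refine ⟨fun ⟨L, hL⟩ => ?_⟩
  obtain ⟨hlen, hsum, -⟩ := mem_coloredMotzkinSet_iff.1 hL
  rw [List.length_eq_zero_iff.1 hlen] at hsum
  simp at hsum
  omega

lemma exists_last_height_le {L : List (ℤ × ℕ)} {m : ℤ} (hm : 0 ≤ m)
    (hsum : m < (L.map Prod.fst).sum) :
    ∃ a < L.length, height L a ≤ m ∧ ∀ j, a < j → m < height L j := by
  set a := Nat.findGreatest (fun j => height L j ≤ m) L.length
  have hat : height L a ≤ m :=
    Nat.findGreatest_spec (P := fun j => height L j ≤ m) (m := 0) (Nat.zero_le _) (by simpa)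
  have hafter : ∀ j, a < j → m < height L j := by
    intro j hj
    by_cases hjL : j ≤ L.length
    · exact not_le.1 (Nat.findGreatest_is_greatest hj hjL)
    · rwa [height_of_length_le (by omega)]
  refine ⟨a, lt_of_le_of_ne (Nat.findGreatest_le _) fun h => ?_, hat, hafter⟩
  rw [h, height_of_length_le le_rfl] at hat
  omega

section Decomposition

variable {m a b k : ℕ} {Q P : List (ℤ × ℕ)}

lemma append_up_append_mem (hab : a + b = k) (hQ : Q ∈ ColoredMotzkinSet ℓ α β a m)
    (hP : P ∈ ColoredMotzkinSet ℓ β β b 0) :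
    Q ++ (1, 0) :: P ∈ ColoredMotzkinSet ℓ α β (k + 1) (m + 1) := by
  rw [mem_coloredMotzkinSet_iff] at hQ hP ⊢
  obtain ⟨rfl, hQsum, hQ⟩ := hQ
  obtain ⟨rfl, hPsum, hP⟩ := hP
  refine ⟨by simp; omega, by simp [hQsum, hPsum], ?_⟩
  rw [validFrom_append, hQsum]
  simp only [ValidFrom]
  refine ⟨hQ, by positivity, Or.inl ⟨rfl, rfl⟩, ?_⟩
  simpa using ((validFrom_iff_add (α := α) le_rfl (by positivity : (0 : ℤ) < m + 1)).1 hP).1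

lemma height_append_up_append (hQ : Q ∈ ColoredMotzkinSet ℓ α β a m)
    (hP : P ∈ ColoredMotzkinSet ℓ β β b 0) :
    height (Q ++ (1, 0) :: P) a = m ∧ ∀ j, a < j → m < height (Q ++ (1, 0) :: P) j := by
  obtain ⟨rfl, hQsum, -⟩ := mem_coloredMotzkinSet_iff.1 hQ
  have hPnonneg := ((validFrom_iff_add (α := α) le_rfl one_pos).1
    (mem_coloredMotzkinSet_iff.1 hP).2.2).2
  refine ⟨by simpa [hQsum] using height_append Q ((1, 0) :: P) 0, fun j hj => ?_⟩
  obtain ⟨i, rfl⟩ : ∃ i, j = Q.length + (i + 1) := ⟨j - Q.length - 1, by omega⟩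
  have := hPnonneg i
  simp only [height_append, height_cons_succ, hQsum]
  omega

lemma findGreatest_height_le (hab : a + b = k) (hQ : Q ∈ ColoredMotzkinSet ℓ α β a m)
    (hP : P ∈ ColoredMotzkinSet ℓ β β b 0) :
    Nat.findGreatest (fun j => height (Q ++ (1, 0) :: P) j ≤ m) (k + 1) = a := by
  obtain ⟨hat, hafter⟩ := height_append_up_append hQ hP
  rw [Nat.findGreatest_eq_iff]
  exact ⟨by omega, fun _ => hat.le, fun j hj _ => not_le.2 (hafter j hj)⟩

lemma exists_eq_append_up_append {L : List (ℤ × ℕ)}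
    (hL : L ∈ ColoredMotzkinSet ℓ α β (k + 1) (m + 1)) :
    ∃ a b Q P, a + b = k ∧ Q ∈ ColoredMotzkinSet ℓ α β a m ∧
      P ∈ ColoredMotzkinSet ℓ β β b 0 ∧ L = Q ++ (1, 0) :: P := by
  obtain ⟨hlen, hsum, hvalid⟩ := mem_coloredMotzkinSet_iff.1 hL
  obtain ⟨a, hak, hat, hafter⟩ := exists_last_height_le (L := L) (Nat.cast_nonneg m) (by omega)
  obtain ⟨Q, ⟨s, c⟩, P, rfl, rfl⟩ : ∃ Q x P, L = Q ++ x :: P ∧ Q.length = a :=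
    ⟨L.take a, L[a], L.drop (a + 1), by rw [← List.drop_eq_getElem_cons, List.take_append_drop],
      by simp; omega⟩
  simp only [validFrom_append, ValidFrom, zero_add] at hvalid
  obtain ⟨hQvalid, -, hup, hPvalid⟩ := hvalid
  have hQsum : (Q.map Prod.fst).sum ≤ m := by
    rw [← add_zero Q.length, height_append] at hat
    simpa using hat
  have hPheight (j : ℕ) : m < (Q.map Prod.fst).sum + (s + height P j) := by
    simpa [height_append] using hafter (Q.length + (j + 1)) (by omega)
  have hcross : m < (Q.map Prod.fst).sum + s := by simpa using hPheight 0
  obtain ⟨rfl, rfl⟩ := Prod.ext_iff.1 (eq_up_of_motzkinStepOK hup (by omega))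
  have hQm : (Q.map Prod.fst).sum = m := by omega
  refine ⟨Q.length, P.length, Q, P, by simp at hlen; omega,
    mem_coloredMotzkinSet_iff.2 ⟨rfl, hQm, hQvalid⟩,
    mem_coloredMotzkinSet_iff.2 ⟨rfl, by simp at hsum; omega, ?_⟩, rfl⟩
  rw [hQm] at hPvalid
  refine (validFrom_iff_add le_rfl (by positivity : (0 : ℤ) < m + 1)).2 ⟨by simpa using hPvalid, ?_⟩
  intro j
  have := hPheight j
  omega

end Decomposition

lemma M_succ_succ (ℓ : ℕ) (α β : ℕ → ℕ) (m k : ℕ) :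
    M ℓ α β (k + 1) (m + 1) = ∑ p ∈ antidiagonal k, M ℓ α β p.1 m * M ℓ β β p.2 0 := by
  let glue : (Σ p : antidiagonal k,
      ColoredMotzkinSet ℓ α β p.1.1 m × ColoredMotzkinSet ℓ β β p.1.2 0) →
      ColoredMotzkinSet ℓ α β (k + 1) (m + 1) :=
    fun ⟨p, Q, P⟩ =>
      ⟨Q.1 ++ (1, 0) :: P.1, append_up_append_mem (HasAntidiagonal.mem_antidiagonal.1 p.2) Q.2 P.2⟩
  have hglue : Function.Bijective glue := by
    constructor
    · rintro ⟨⟨⟨a₁, b₁⟩, h₁⟩, ⟨Q₁, hQ₁⟩, ⟨P₁, hP₁⟩⟩ ⟨⟨⟨a₂, b₂⟩, h₂⟩, ⟨Q₂, hQ₂⟩, ⟨P₂, hP₂⟩⟩ hglue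
      have hab₁ : a₁ + b₁ = k := HasAntidiagonal.mem_antidiagonal.1 h₁
      have hab₂ : a₂ + b₂ = k := HasAntidiagonal.mem_antidiagonal.1 h₂
      have heq : Q₁ ++ (1, 0) :: P₁ = Q₂ ++ (1, 0) :: P₂ := congrArg Subtype.val hglue
      obtain rfl : a₁ = a₂ := by
        rw [← findGreatest_height_le hab₁ hQ₁ hP₁, ← findGreatest_height_le hab₂ hQ₂ hP₂, heq]
      obtain rfl : b₁ = b₂ := by omega
      obtain ⟨rfl, hP⟩ := List.append_inj heq (hQ₁.1.trans hQ₂.1.symm)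
      obtain rfl := (List.cons_injective hP)
      rfl
    · rintro ⟨L, hL⟩
      obtain ⟨a, b, Q, P, hab, hQ, hP, rfl⟩ := exists_eq_append_up_append hL
      exact ⟨⟨⟨(a, b), HasAntidiagonal.mem_antidiagonal.2 hab⟩, ⟨Q, hQ⟩, ⟨P, hP⟩⟩, rfl⟩
  rw [M, ← Nat.card_eq_of_bijective glue hglue, Nat.card_sigma]
  simp only [Nat.card_prod, M]
  exact sum_coe_sort _ (fun p : ℕ × ℕ => M ℓ α β p.1 m * M ℓ β β p.2 0)

end ColoredMotzkin

theorem motzkin_column_gf_general (ℓ : ℕ) (α β : ℕ → ℕ)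
    (m : ℕ) (n : ℕ) :
    M ℓ α β n m =
      PowerSeries.coeff n
        ((PowerSeries.X : PowerSeries ℕ) ^ m *
          PowerSeries.mk (fun j => M ℓ α β j 0) *
          (PowerSeries.mk (fun j => M ℓ β β j 0)) ^ m) := by
  induction m generalizing n with
  | zero => simp
  | succ m ih =>
    set f : PowerSeries ℕ := mk fun j => M ℓ α β j 0
    set g : PowerSeries ℕ := mk fun j => M ℓ β β j 0
    rw [show X ^ (m + 1) * f * g ^ (m + 1) = X ^ m * f * g ^ m * g * X by ring]
    cases n with
    | zero => rw [coeff_zero_mul_X, ColoredMotzkin.M_zero_succ]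
    | succ k =>
      rw [coeff_succ_mul_X, coeff_mul, ColoredMotzkin.M_succ_succ]
      simp only [ih, g, coeff_mk]

/-- The generating-function identity
`M_m^ℓ(α,β,t) = t^m · M_0^ℓ(α,β,t) · (M_0^ℓ(β,β,t))^m`, coefficientwise. -/
theorem motzkin_column_gf (ℓ : ℕ) (hℓ : 1 ≤ ℓ) (α β : ℕ → ℕ)
    (m : ℕ) (hm : 1 ≤ m) (n : ℕ) :
    M ℓ α β n m =
      PowerSeries.coeff n
        ((PowerSeries.X : PowerSeries ℕ) ^ m *
          PowerSeries.mk (fun j => M ℓ α β j 0) *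
          (PowerSeries.mk (fun j => M ℓ β β j 0)) ^ m) :=
  motzkin_column_gf_general ℓ α β m n
end

section
/- Fix ℓ ≥ 1 and an ℓ-tuple of nonnegative integers α = (α_0, α_1, …, α_{ℓ-1}). For every n ≥ 0, the total number of (α,α)-colored order-ℓ Motzkin paths of length n ending at any height m ≥ 0 equals the number of (α+e_1, α)-colored order-ℓ Motzkin paths of length n ending at height 0, where α+e_1 = (α_0+1, α_1, …, α_{ℓ-1}). That is, Σ_{m=0}^{n} M^ℓ_{n,m}(α,α) = M^ℓ_{n,0}(α+e_1, α). -/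
open Finset PowerSeries

namespace MotzkinAux

variable (ℓ : ℕ) (α β : ℕ → ℕ)

/-- The number of colors available for a step of displacement `-d` ending at height `m`. -/
def ncolors (m d : ℕ) : ℕ := if d = ℓ then 1 else if m = 0 then α d else β d

/-- The finset of allowed final steps for a path ending at height `m`. -/
def stepFinset (m : ℕ) : Finset (ℤ × ℕ) :=
  (if 1 ≤ m then {((1 : ℤ), 0)} else ∅) ∪
    (Finset.range (ℓ + 1)).biUnion (fun d =>
      (Finset.range (ncolors ℓ α β m d)).image (fun c => (-(d : ℤ), c)))

lemma mem_stepFinset {m : ℕ} {q : ℤ × ℕ} :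
    q ∈ stepFinset ℓ α β m ↔ MotzkinStepOK ℓ α β q.1 q.2 (m : ℤ) ∧ q.1 ≤ (m : ℤ) := by
  simp only [stepFinset, Finset.mem_union, Finset.mem_biUnion, Finset.mem_image,
    Finset.mem_range, ncolors, MotzkinStepOK]
  constructor
  · rintro (h | ⟨d, hd, c, hc, rfl⟩)
    · have hm : 1 ≤ m := by by_contra hm; simp [hm] at h
      simp only [hm, if_pos, Finset.mem_singleton] at h
      subst h
      exact ⟨Or.inl ⟨rfl, rfl⟩, by show (1 : ℤ) ≤ (m : ℤ); exact_mod_cast hm⟩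
    · refine ⟨Or.inr ⟨d, by omega, rfl, ?_⟩, by show -(d : ℤ) ≤ (m : ℤ); omega⟩
      · by_cases hdl : d = ℓ
        · simp only [hdl, if_pos] at hc ⊢; omega
        · simp only [hdl, if_neg, Nat.cast_eq_zero] at hc ⊢
          by_cases hm0 : m = 0 <;> simp [hm0] at hc ⊢ <;> omega
  · rintro ⟨(⟨hs, hc⟩ | ⟨d, hd, hs, hc⟩), hle⟩
    · left
      have hm : 1 ≤ m := by omega
      simp only [hm, if_pos, Finset.mem_singleton]
      exact Prod.ext hs hc
    · right
      refine ⟨d, by omega, q.2, ?_, Prod.ext hs.symm rfl⟩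
      by_cases hdl : d = ℓ
      · simp only [hdl, if_pos] at hc ⊢; omega
      · simp only [hdl, if_neg, Nat.cast_eq_zero] at hc ⊢
        by_cases hm0 : m = 0 <;> simp [hm0] at hc ⊢ <;> omega

lemma mem_concat {n m : ℕ} {L : List (ℤ × ℕ)} {q : ℤ × ℕ} (hL : L.length = n) :
    (L ++ [q]) ∈ ColoredMotzkinSet ℓ α β (n + 1) m ↔
      MotzkinStepOK ℓ α β q.1 q.2 (m : ℤ) ∧ q.1 ≤ (m : ℤ) ∧
        L ∈ ColoredMotzkinSet ℓ α β n ((m : ℤ) - q.1).toNat := by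
  have hsum : ((L ++ [q]).map Prod.fst).sum = (L.map Prod.fst).sum + q.1 := by simp
  have htake : ∀ i : ℕ, i < n → (L ++ [q]).take (i + 1) = L.take (i + 1) := fun i hi =>
    List.take_append_of_le_length (by omega)
  have htaken : (L ++ [q]).take (n + 1) = L ++ [q] := by
    have : (L ++ [q]).length = n + 1 := by simp [hL]
    rw [← this, List.take_length]
  have hgetD : ∀ i : ℕ, i < n → (L ++ [q]).getD i (0, 0) = L.getD i (0, 0) := fun i hi =>
    List.getD_append _ _ _ _ (by omega)
  have hgetDn : (L ++ [q]).getD n (0, 0) = q := by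
    rw [List.getD_append_right _ _ _ _ (by omega)]
    simp [hL]
  have htakeL : L.take n = L := by rw [← hL, List.take_length]
  constructor
  · rintro ⟨h1, h2, h3⟩
    rw [hsum] at h2
    obtain ⟨-, hok⟩ := h3 n (by omega)
    rw [htaken, hsum, h2, hgetDn] at hok
    have hnn : 0 ≤ (L.map Prod.fst).sum := by
      rcases Nat.eq_zero_or_pos n with h0 | hpos
      · have : L = [] := List.length_eq_zero_iff.mp (by omega)
        simp [this]
      · have h4 := (h3 (n - 1) (by omega)).1
        rw [htake (n - 1) (by omega), show n - 1 + 1 = n by omega, htakeL] at h4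
        exact h4
    refine ⟨hok, by omega, hL, ?_, ?_⟩
    · rw [Int.toNat_of_nonneg (by omega)]; omega
    · intro i hi
      have h5 := h3 i (by omega)
      rw [htake i hi, hgetD i hi] at h5
      exact h5
  · rintro ⟨hok, hle, -, hsum', hsteps'⟩
    rw [Int.toNat_of_nonneg (by omega)] at hsum'
    refine ⟨by simp [hL], by rw [hsum]; omega, ?_⟩
    intro i hi
    rcases Nat.lt_or_ge i n with hi' | hi'
    · rw [htake i hi', hgetD i hi']
      exact hsteps' i hi'
    · have hin : i = n := by omega
      subst hin
      rw [htaken, hsum, hgetDn, show (L.map Prod.fst).sum + q.1 = (m : ℤ) by omega]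
      exact ⟨by positivity, hok⟩

/-- The set of (last step, initial part) decompositions. -/
def lastSet (n m : ℕ) : Set ((ℤ × ℕ) × List (ℤ × ℕ)) :=
  {x | x.1 ∈ stepFinset ℓ α β m ∧ x.2 ∈ ColoredMotzkinSet ℓ α β n ((m : ℤ) - x.1.1).toNat}

lemma concat_inj : Function.Injective (fun x : (ℤ × ℕ) × List (ℤ × ℕ) => x.2 ++ [x.1]) := by
  rintro ⟨q1, L1⟩ ⟨q2, L2⟩ h
  simp only at h
  have h1 := congrArg List.dropLast h
  have h2 := congrArg (fun l : List (ℤ × ℕ) => l.getLast? ) h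
  simp only [List.dropLast_concat] at h1
  simp only [List.getLast?_concat] at h2
  simp_all

lemma cms_succ_eq (n m : ℕ) :
    ColoredMotzkinSet ℓ α β (n + 1) m =
      (fun x : (ℤ × ℕ) × List (ℤ × ℕ) => x.2 ++ [x.1]) '' lastSet ℓ α β n m := by
  ext L
  constructor
  · intro hL
    have hne : L ≠ [] := by
      intro h
      have := hL.1
      simp [h] at this
    have hdec : L.dropLast ++ [L.getLast hne] = L := List.dropLast_append_getLast hne
    have hlen : L.dropLast.length = n := by
      have := hL.1
      simp only [List.length_dropLast, this]
      omega
    rw [← hdec] at hL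
    obtain ⟨hok, hle, hmem⟩ := (mem_concat ℓ α β hlen).mp hL
    exact ⟨(L.getLast hne, L.dropLast),
      ⟨(mem_stepFinset ℓ α β).mpr ⟨hok, hle⟩, hmem⟩, hdec⟩
  · rintro ⟨⟨q, L'⟩, ⟨hq, hL'⟩, rfl⟩
    obtain ⟨hok, hle⟩ := (mem_stepFinset ℓ α β).mp hq
    exact (mem_concat ℓ α β hL'.1).mpr ⟨hok, hle, hL'⟩

/-- `lastSet` viewed as a sigma type. -/
def equivSigma (n m : ℕ) :
    lastSet ℓ α β n m ≃
      Σ q : stepFinset ℓ α β m, ColoredMotzkinSet ℓ α β n ((m : ℤ) - (q : ℤ × ℕ).1).toNat where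
  toFun x := ⟨⟨x.1.1, x.2.1⟩, ⟨x.1.2, x.2.2⟩⟩
  invFun y := ⟨(y.1.1, y.2.1), y.1.2, y.2.2⟩
  left_inv x := rfl
  right_inv y := rfl

lemma cms_finite : ∀ n m : ℕ, (ColoredMotzkinSet ℓ α β n m).Finite
  | 0, m => by
    apply Set.Finite.subset (Set.finite_singleton ([] : List (ℤ × ℕ)))
    intro L hL
    have := hL.1
    simp [List.length_eq_zero_iff.mp this]
  | (n + 1), m => by
    rw [cms_succ_eq]
    apply Set.Finite.image
    haveI : ∀ q : stepFinset ℓ α β m,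
        Finite (ColoredMotzkinSet ℓ α β n ((m : ℤ) - (q : ℤ × ℕ).1).toNat) :=
      fun q => (cms_finite n _).to_subtype
    have : Finite (Σ q : stepFinset ℓ α β m,
        ColoredMotzkinSet ℓ α β n ((m : ℤ) - (q : ℤ × ℕ).1).toNat) := inferInstance
    rw [← Set.finite_coe_iff]
    exact Finite.of_equiv _ (equivSigma ℓ α β n m).symm

lemma card_sigma' {ι : Type*} [Fintype ι] {f : ι → Type*} [∀ i, Finite (f i)] :
    Nat.card (Σ i, f i) = ∑ i, Nat.card (f i) := by
  letI : ∀ i, Fintype (f i) := fun i => Fintype.ofFinite _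
  simp [Nat.card_eq_fintype_card]

lemma M_zero (m : ℕ) : M ℓ α β 0 m = if m = 0 then 1 else 0 := by
  by_cases hm : m = 0
  · subst hm
    have : ColoredMotzkinSet ℓ α β 0 0 = {[]} := by
      ext L
      constructor
      · intro hL
        exact List.length_eq_zero_iff.mp hL.1
      · rintro rfl
        exact ⟨rfl, by simp, by omega⟩
    simp [M, this]
  · have : ColoredMotzkinSet ℓ α β 0 m = ∅ := by
      ext L
      simp only [Set.mem_empty_iff_false, iff_false]
      intro hL
      have h1 := hL.1
      have h2 := hL.2.1
      rw [List.length_eq_zero_iff.mp h1] at h2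
      simp at h2
      omega
    simp [M, this, hm]

lemma M_succ (n m : ℕ) :
    M ℓ α β (n + 1) m = (if 1 ≤ m then M ℓ α β n (m - 1) else 0) +
      ∑ d ∈ Finset.range (ℓ + 1), ncolors ℓ α β m d * M ℓ α β n (m + d) := by
  have h1 : M ℓ α β (n + 1) m = ∑ q ∈ stepFinset ℓ α β m, M ℓ α β n ((m : ℤ) - q.1).toNat := by
    rw [M, cms_succ_eq, Nat.card_image_of_injective (concat_inj) _,
      Nat.card_congr (equivSigma ℓ α β n m)]
    haveI : ∀ q : stepFinset ℓ α β m,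
        Finite (ColoredMotzkinSet ℓ α β n ((m : ℤ) - (q : ℤ × ℕ).1).toNat) :=
      fun q => (cms_finite ℓ α β n _).to_subtype
    rw [card_sigma']
    rw [← Finset.sum_coe_sort (stepFinset ℓ α β m)
      (fun q => M ℓ α β n ((m : ℤ) - q.1).toNat)]
    rfl
  rw [h1, stepFinset, Finset.sum_union, Finset.sum_biUnion]
  · congr 1
    · by_cases hm : 1 ≤ m
      · simp only [hm, if_pos, Finset.sum_singleton]
        congr 1
        omega
      · simp [hm]
    · apply Finset.sum_congr rfl
      intro d hd
      rw [Finset.sum_image (by intro a _ b _ hab; simpa using hab)]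
      have : ∀ c ∈ Finset.range (ncolors ℓ α β m d),
          M ℓ α β n ((m : ℤ) - (-(d : ℤ))).toNat = M ℓ α β n (m + d) := by
        intro c _
        congr 1
        omega
      rw [Finset.sum_congr rfl this, Finset.sum_const, smul_eq_mul, Finset.card_range]
  · -- pairwise disjointness of the biUnion
    intro d1 hd1 d2 hd2 hne
    simp only [Finset.disjoint_left, Finset.mem_image, Finset.mem_range]
    rintro q ⟨c1, _, rfl⟩ ⟨c2, _, h⟩
    have : (d2 : ℤ) = (d1 : ℤ) := by
      have := congrArg Prod.fst h
      simpa using this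
    exact hne (by exact_mod_cast this.symm)
  · -- disjointness of up part and down part
    simp only [Finset.disjoint_left]
    intro q hq hq'
    have h1 : q.1 = 1 := by
      by_cases hm : 1 ≤ m
      · simp only [hm, if_pos, Finset.mem_singleton] at hq
        rw [hq]
      · simp [hm] at hq
    simp only [Finset.mem_biUnion, Finset.mem_image, Finset.mem_range] at hq'
    obtain ⟨d, _, c, _, rfl⟩ := hq'
    simp at h1
    omega

lemma M_vanish : ∀ n m : ℕ, n < m → M ℓ α β n m = 0 := by
  intro n
  induction n with
  | zero => intro m hm; rw [M_zero]; simp; omega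
  | succ n ih =>
    intro m hm
    rw [M_succ]
    have h1 : (if 1 ≤ m then M ℓ α β n (m - 1) else 0) = 0 := by
      have : 1 ≤ m := by omega
      simp only [this, if_pos]
      exact ih (m - 1) (by omega)
    rw [h1, Finset.sum_eq_zero, add_zero]
    intro d _
    rw [ih (m + d) (by omega), mul_zero]

end MotzkinAux

open MotzkinAux

section KeyLemma

variable (ℓ : ℕ) (α : ℕ → ℕ)

private lemma ncolors_self (m d : ℕ) : ncolors ℓ α α m d = if d = ℓ then 1 else α d := by
  unfold ncolors
  by_cases h : d = ℓ <;> simp [h]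

private lemma icc_insert_bot {a b : ℕ} (h : a ≤ b) :
    Finset.Icc a b = insert a (Finset.Icc (a + 1) b) := by
  ext x
  simp only [Finset.mem_Icc, Finset.mem_insert]
  omega

private lemma S_bot (n d : ℕ) :
    (∑ k ∈ Finset.Icc d n, M ℓ α α n k) =
      M ℓ α α n d + ∑ k ∈ Finset.Icc (d + 1) n, M ℓ α α n k := by
  rcases le_or_gt d n with h | h
  · rw [icc_insert_bot h, Finset.sum_insert (by simp)]
  · rw [M_vanish ℓ α α n d h, Finset.Icc_eq_empty (by omega), Finset.Icc_eq_empty (by omega)]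
    simp

private lemma sum_shift (n m : ℕ) (hm : 1 ≤ m) :
    ∑ k ∈ Finset.Icc m (n + 1), M ℓ α α n (k - 1) =
      ∑ k ∈ Finset.Icc (m - 1) n, M ℓ α α n k := by
  have hmap : Finset.Icc m (n + 1) =
      (Finset.Icc (m - 1) n).map ⟨fun k => k + 1, add_left_injective 1⟩ := by
    ext x
    simp only [Finset.mem_map, Finset.mem_Icc, Function.Embedding.coeFn_mk]
    constructor
    · intro hx; exact ⟨x - 1, by omega, by omega⟩
    · rintro ⟨y, hy, rfl⟩; omega
  rw [hmap, Finset.sum_map]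
  rfl

private lemma sum_add (n m d : ℕ) :
    ∑ k ∈ Finset.Icc m (n + 1), M ℓ α α n (k + d) =
      ∑ k ∈ Finset.Icc (m + d) n, M ℓ α α n k := by
  have h1 : ∑ k ∈ Finset.Icc m (n + 1), M ℓ α α n (k + d) =
      ∑ k ∈ Finset.Icc (m + d) (n + 1 + d), M ℓ α α n k := by
    have hmap : Finset.Icc (m + d) (n + 1 + d) =
        (Finset.Icc m (n + 1)).map ⟨fun k => k + d, add_left_injective d⟩ := by
      ext x
      simp only [Finset.mem_map, Finset.mem_Icc, Function.Embedding.coeFn_mk]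
      constructor
      · intro hx; exact ⟨x - d, by omega, by omega⟩
      · rintro ⟨y, hy, rfl⟩; omega
    rw [hmap, Finset.sum_map]
    rfl
  rw [h1]
  symm
  apply Finset.sum_subset
  · apply Finset.Icc_subset_Icc_right; omega
  · intro k hk hk'
    simp only [Finset.mem_Icc] at hk hk'
    exact M_vanish ℓ α α n k (by omega)

private lemma key (hℓ : 1 ≤ ℓ) (α' : ℕ → ℕ) (hα'0 : α' 0 = α 0 + 1)
    (hα' : ∀ i, i ≠ 0 → α' i = α i) :
    ∀ n m : ℕ, M ℓ α' α n m = ∑ k ∈ Finset.Icc m n, M ℓ α α n k := by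
  intro n
  induction n with
  | zero =>
    intro m
    rcases Nat.eq_zero_or_pos m with h | h
    · subst h; simp [M_zero]
    · rw [M_zero, Finset.Icc_eq_empty (by omega)]
      simp; omega
  | succ n ih =>
    intro m
    rw [M_succ]
    have hrec : ∀ m' : ℕ, 1 ≤ m' → ∑ k ∈ Finset.Icc m' (n + 1), M ℓ α α (n + 1) k =
        (∑ k ∈ Finset.Icc (m' - 1) n, M ℓ α α n k) +
          ∑ d ∈ Finset.range (ℓ + 1), (if d = ℓ then 1 else α d) *
            ∑ k ∈ Finset.Icc (m' + d) n, M ℓ α α n k := by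
      intro m' hm'
      have h1 : ∑ k ∈ Finset.Icc m' (n + 1), M ℓ α α (n + 1) k =
          ∑ k ∈ Finset.Icc m' (n + 1), ((if 1 ≤ k then M ℓ α α n (k - 1) else 0) +
            ∑ d ∈ Finset.range (ℓ + 1), ncolors ℓ α α k d * M ℓ α α n (k + d)) := by
        apply Finset.sum_congr rfl
        intro k _
        rw [M_succ]
      rw [h1, Finset.sum_add_distrib]
      congr 1
      · rw [← sum_shift ℓ α n m' hm']
        apply Finset.sum_congr rfl
        intro k hk
        simp only [Finset.mem_Icc] at hk
        rw [if_pos (by omega)]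
      · rw [Finset.sum_comm]
        apply Finset.sum_congr rfl
        intro d _
        rw [← sum_add ℓ α n m' d, Finset.mul_sum]
        apply Finset.sum_congr rfl
        intro k _
        rw [ncolors_self]
    rcases Nat.eq_zero_or_pos m with hm | hm
    · subst hm
      -- m = 0 case
      rw [if_neg (by omega : ¬ 1 ≤ 0), zero_add]
      have hLHS : ∑ d ∈ Finset.range (ℓ + 1), ncolors ℓ α' α 0 d * M ℓ α' α n (0 + d) =
          (∑ k ∈ Finset.Icc 0 n, M ℓ α α n k) +
            ∑ d ∈ Finset.range (ℓ + 1), (if d = ℓ then 1 else α d) *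
              ∑ k ∈ Finset.Icc d n, M ℓ α α n k := by
        have hterm : ∀ d ∈ Finset.range (ℓ + 1),
            ncolors ℓ α' α 0 d * M ℓ α' α n (0 + d) =
              (if d = 0 then ∑ k ∈ Finset.Icc 0 n, M ℓ α α n k else 0) +
                (if d = ℓ then 1 else α d) * ∑ k ∈ Finset.Icc d n, M ℓ α α n k := by
          intro d _
          rw [zero_add, ih d]
          have hn : ncolors ℓ α' α 0 d = if d = ℓ then 1 else α' d := by
            unfold ncolors
            by_cases hdl : d = ℓ <;> simp [hdl]
          rw [hn]
          by_cases hdl : d = ℓ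
          · have hd0 : ¬ d = 0 := by omega
            rw [if_pos hdl, if_pos hdl, if_neg hd0, zero_add]
          · rw [if_neg hdl, if_neg hdl]
            by_cases hd0 : d = 0
            · subst hd0
              rw [if_pos rfl, hα'0]
              ring
            · rw [if_neg hd0, hα' d hd0, zero_add]
        rw [Finset.sum_congr rfl hterm, Finset.sum_add_distrib,
          Finset.sum_ite_eq' (Finset.range (ℓ + 1)) 0]
        rw [if_pos (by simp)]
      rw [hLHS]
      have hRHS : ∑ k ∈ Finset.Icc 0 (n + 1), M ℓ α α (n + 1) k =
          (∑ d ∈ Finset.range (ℓ + 1), (if d = ℓ then 1 else α d) * M ℓ α α n d) +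
            ((∑ k ∈ Finset.Icc 0 n, M ℓ α α n k) +
              ∑ d ∈ Finset.range (ℓ + 1), (if d = ℓ then 1 else α d) *
                ∑ k ∈ Finset.Icc (d + 1) n, M ℓ α α n k) := by
        rw [icc_insert_bot (by omega : 0 ≤ n + 1), Finset.sum_insert (by simp),
          hrec 1 le_rfl, M_succ]
        rw [if_neg (by omega : ¬ 1 ≤ 0), zero_add, Nat.sub_self]
        congr 1
        · apply Finset.sum_congr rfl
          intro d _
          rw [ncolors_self, zero_add]
        · congr 1
          apply Finset.sum_congr rfl
          intro d _
          rw [show 1 + d = d + 1 by omega]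
      rw [hRHS]
      have hsplit : ∀ d ∈ Finset.range (ℓ + 1),
          (if d = ℓ then 1 else α d) * ∑ k ∈ Finset.Icc d n, M ℓ α α n k =
            (if d = ℓ then 1 else α d) * M ℓ α α n d +
              (if d = ℓ then 1 else α d) * ∑ k ∈ Finset.Icc (d + 1) n, M ℓ α α n k := by
        intro d _
        rw [S_bot, mul_add]
      rw [Finset.sum_congr rfl hsplit, Finset.sum_add_distrib]
      ring
    · -- m ≥ 1 case
      rw [if_pos (show 1 ≤ m from hm)]
      have hcol : ∀ d, ncolors ℓ α' α m d = if d = ℓ then 1 else α d := by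
        intro d
        unfold ncolors
        have h0 : ¬ m = 0 := by omega
        by_cases hdl : d = ℓ <;> simp [hdl, h0]
      rw [hrec m hm, ih]
      congr 1
      apply Finset.sum_congr rfl
      intro d _
      rw [ih, hcol]

end KeyLemma

/-- Row sums of the `(α,α)`-colored Motzkin triangle equal the `(α+e₁,α)`-colored
Motzkin numbers. -/
theorem motzkin_row_sums (ℓ : ℕ) (hℓ : 1 ≤ ℓ) (α : ℕ → ℕ) (n : ℕ) :
    (∑ m ∈ Finset.range (n + 1), M ℓ α α n m) =
      M ℓ (fun i => if i = 0 then α 0 + 1 else α i) α n 0 := by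
  rw [key ℓ α hℓ (fun i => if i = 0 then α 0 + 1 else α i) (by simp)
    (fun i hi => by simp [hi]) n 0]
  apply Finset.sum_congr
  · ext x; simp [Finset.mem_Icc, Finset.mem_range]
  · intros; rfl
end

section
/- Fix ℓ ≥ 1, m ≥ 0, and ℓ-tuples of nonnegative integers α, β. For all n ≥ 0, Σ_{i=0}^{n} C(n,i) · M^ℓ_{i,m}(α,β) = M^ℓ_{n,m}(α+e_1, β+e_1), where e_1 = (1,0,…,0); i.e., the binomial transform of the m-th column of the (α,β)-colored Motzkin triangle is the m-th column of the (α+e_1, β+e_1)-colored Motzkin triangle. -/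
open Finset PowerSeries

/-- The number of allowed colors for a down step `D_d` ending at height `m`
(`1` for the uncolored maximal down step `D_ℓ`). -/
def ccM (ℓ : ℕ) (α β : ℕ → ℕ) (m d : ℕ) : ℕ :=
  if d = ℓ then 1 else if m = 0 then α d else β d

/-- The finset of allowed final steps of a path ending at height `m`. -/
def stepsM (ℓ : ℕ) (α β : ℕ → ℕ) (m : ℕ) : Finset (ℤ × ℕ) :=
  (if m = 0 then (∅ : Finset (ℤ × ℕ)) else {((1 : ℤ), 0)}) ∪
    (Finset.range (ℓ + 1)).biUnion fun d =>
      (Finset.range (ccM ℓ α β m d)).image fun c => (-(d : ℤ), c)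

lemma mem_stepsM {ℓ : ℕ} {α β : ℕ → ℕ} {m : ℕ} {p : ℤ × ℕ} :
    p ∈ stepsM ℓ α β m ↔ MotzkinStepOK ℓ α β p.1 p.2 (m : ℤ) ∧ p.1 ≤ (m : ℤ) := by
  simp only [stepsM, Finset.mem_union, Finset.mem_biUnion, Finset.mem_image,
    Finset.mem_range, MotzkinStepOK]
  constructor
  · rintro (hup | ⟨d, hd, c, hc, rfl⟩)
    · rcases Nat.eq_zero_or_pos m with rfl | hm
      · simp at hup
      · rw [if_neg hm.ne'] at hup
        simp only [Finset.mem_singleton] at hup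
        subst hup
        exact ⟨Or.inl ⟨rfl, rfl⟩, by simp; omega⟩
    · refine ⟨Or.inr ⟨d, by omega, rfl, ?_⟩, by simp⟩
      unfold ccM at hc
      split_ifs at hc ⊢ <;> first | assumption | omega | simp_all
  · rintro ⟨hup | ⟨d, hd, hs, hc⟩, hle⟩
    · obtain ⟨h1, h2⟩ := hup
      left
      have hm : m ≠ 0 := by omega
      rw [if_neg hm]
      simp [Prod.ext_iff, h1, h2]
    · right
      refine ⟨d, by omega, p.2, ?_, by rw [← hs]⟩
      unfold ccM
      split_ifs at hc ⊢ <;> first | assumption | omega | simp_all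

lemma CMS_succ (ℓ : ℕ) (α β : ℕ → ℕ) (n m : ℕ) :
    ColoredMotzkinSet ℓ α β (n + 1) m =
      ⋃ p ∈ stepsM ℓ α β m,
        (fun L => L ++ [p]) '' ColoredMotzkinSet ℓ α β n ((m : ℤ) - p.1).toNat := by
  ext L
  simp only [Set.mem_iUnion, Set.mem_image, exists_prop]
  constructor
  · rintro ⟨hlen, hsum, hcond⟩
    obtain ⟨L', a, rfl⟩ : ∃ L' a, L = L' ++ [a] := by
      clear hsum hcond
      induction L using List.reverseRecOn with
      | nil => simp at hlen
      | append_singleton L a _ => exact ⟨L, a, rfl⟩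
    have hlen' : L'.length = n := by simpa using hlen
    have hsum' : (L'.map Prod.fst).sum + a.1 = (m : ℤ) := by simpa using hsum
    have htake : ∀ i < n, (L' ++ [a]).take (i + 1) = L'.take (i + 1) := fun i hi =>
      List.take_append_of_le_length (by omega)
    have hgetD : ∀ i < n, (L' ++ [a]).getD i (0, 0) = L'.getD i (0, 0) := fun i hi =>
      List.getD_append _ _ _ _ (by omega)
    have hm' : 0 ≤ (L'.map Prod.fst).sum := by
      rcases Nat.eq_zero_or_pos n with rfl | hn
      · rw [List.length_eq_zero_iff.mp hlen']; simp
      · have := (hcond (n - 1) (by omega)).1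
        rwa [show n - 1 + 1 = n from by omega, ← hlen', List.take_left] at this
    have hgetlast : (L' ++ [a]).getD n (0, 0) = a := by
      rw [List.getD_append_right _ _ _ _ (by omega), hlen']
      simp
    have htop : (((L' ++ [a]).take (n + 1)).map Prod.fst).sum = (m : ℤ) := by
      rw [List.take_of_length_le (by simp [hlen'])]
      exact hsum
    have haok : MotzkinStepOK ℓ α β a.1 a.2 (m : ℤ) := by
      have := (hcond n (by omega)).2
      rwa [hgetlast, htop] at this
    refine ⟨a, mem_stepsM.mpr ⟨haok, by omega⟩, L', ⟨hlen', ?_, ?_⟩, rfl⟩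
    · rw [Int.toNat_of_nonneg (by omega)]; omega
    · intro i hi
      have := hcond i (by omega)
      rwa [htake i hi, hgetD i hi] at this
  · rintro ⟨p, hp, L', ⟨hlen', hsum', hcond'⟩, rfl⟩
    obtain ⟨hok, hle⟩ := mem_stepsM.mp hp
    have hk : (((m : ℤ) - p.1).toNat : ℤ) = (m : ℤ) - p.1 := Int.toNat_of_nonneg (by omega)
    rw [hk] at hsum'
    have hlen : (L' ++ [p]).length = n + 1 := by simp [hlen']
    have hsum : ((L' ++ [p]).map Prod.fst).sum = (m : ℤ) := by simp [hsum']
    refine ⟨hlen, hsum, fun i hi => ?_⟩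
    rcases Nat.lt_succ_iff_lt_or_eq.mp hi with hi' | rfl
    · have htake : (L' ++ [p]).take (i + 1) = L'.take (i + 1) :=
        List.take_append_of_le_length (by omega)
      have hgetD : (L' ++ [p]).getD i (0, 0) = L'.getD i (0, 0) :=
        List.getD_append _ _ _ _ (by omega)
      rw [htake, hgetD]
      exact hcond' i hi'
    · have htop : (((L' ++ [p]).take (i + 1)).map Prod.fst).sum = (m : ℤ) := by
        rw [List.take_of_length_le (by simp; omega)]
        exact hsum
      have hgetlast : (L' ++ [p]).getD i (0, 0) = p := by
        rw [List.getD_append_right _ _ _ _ (by omega), hlen']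
        simp
      rw [htop, hgetlast]
      exact ⟨by positivity, hok⟩

lemma ncard_biUnion_fin {ι γ : Type*} (F : Finset ι) (f : ι → Set γ)
    (hfin : ∀ i ∈ F, (f i).Finite)
    (hdisj : ∀ i ∈ F, ∀ j ∈ F, i ≠ j → Disjoint (f i) (f j)) :
    (⋃ i ∈ F, f i).ncard = ∑ i ∈ F, (f i).ncard := by
  classical
  induction F using Finset.cons_induction with
  | empty => simp
  | cons a F ha ih =>
    rw [Finset.sum_cons]
    have hU : (⋃ i ∈ Finset.cons a F ha, f i) = f a ∪ ⋃ i ∈ F, f i := by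
      simp [Set.iUnion_or, Set.iUnion_union_distrib]
    have hfa : (f a).Finite := hfin a (Finset.mem_cons_self a F)
    have hfU : (⋃ i ∈ F, f i).Finite := by
      apply Set.Finite.biUnion F.finite_toSet
      intro i hi
      exact hfin i (Finset.mem_cons_of_mem hi)
    have hdis : Disjoint (f a) (⋃ i ∈ F, f i) := by
      simp only [Set.disjoint_iUnion_right]
      intro i hi
      exact hdisj a (Finset.mem_cons_self a F) i (Finset.mem_cons_of_mem hi)
        (by rintro rfl; exact ha hi)
    rw [hU, Set.ncard_union_eq hdis hfa hfU,
      ih (fun i hi => hfin i (Finset.mem_cons_of_mem hi))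
        (fun i hi j hj hij => hdisj i (Finset.mem_cons_of_mem hi) j
          (Finset.mem_cons_of_mem hj) hij)]

lemma CMS_finite (ℓ : ℕ) (α β : ℕ → ℕ) : ∀ n m, (ColoredMotzkinSet ℓ α β n m).Finite := by
  intro n
  induction n with
  | zero =>
    intro m
    apply Set.Finite.subset (Set.finite_singleton ([] : List (ℤ × ℕ)))
    intro L hL
    simpa using List.length_eq_zero_iff.mp hL.1
  | succ n ih =>
    intro m
    rw [CMS_succ]
    exact Set.Finite.biUnion (stepsM ℓ α β m).finite_toSet fun p _ => (ih _).image _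

lemma sum_stepsM (ℓ : ℕ) (α β : ℕ → ℕ) (m : ℕ) (g : ℕ → ℕ) :
    ∑ p ∈ stepsM ℓ α β m, g ((m : ℤ) - p.1).toNat =
      (if m = 0 then 0 else g (m - 1)) +
        ∑ d ∈ Finset.range (ℓ + 1), ccM ℓ α β m d * g (m + d) := by
  classical
  unfold stepsM
  rw [Finset.sum_union]
  · congr 1
    · rcases Nat.eq_zero_or_pos m with rfl | hm
      · simp
      · rw [if_neg hm.ne', if_neg hm.ne', Finset.sum_singleton]
        congr 1
        omega
    · rw [Finset.sum_biUnion]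
      · refine Finset.sum_congr rfl fun d hd => ?_
        have : ∀ x ∈ Finset.range (ccM ℓ α β m d),
            g ((m : ℤ) - (-(d : ℤ), x).1).toNat = g (m + d) := by
          intro x _; congr 1; omega
        rw [Finset.sum_image (by intro a _ b _ h; simpa using h), Finset.sum_congr rfl this,
          Finset.sum_const, smul_eq_mul, Finset.card_range]
      · intro d hd e he hde
        simp only [Function.onFun]
        rw [Finset.disjoint_left]
        rintro ⟨s, c⟩ h1 h2
        simp only [Finset.mem_image, Finset.mem_range, Prod.mk.injEq] at h1 h2
        obtain ⟨c1, -, hs1, -⟩ := h1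
        obtain ⟨c2, -, hs2, -⟩ := h2
        exact hde (by omega)
  · rcases Nat.eq_zero_or_pos m with rfl | hm
    · simp
    · rw [if_neg hm.ne', Finset.disjoint_left]
      rintro p hp hq
      simp only [Finset.mem_singleton] at hp
      subst hp
      simp only [Finset.mem_biUnion, Finset.mem_image, Finset.mem_range, Prod.mk.injEq] at hq
      obtain ⟨d, -, c, -, hs, -⟩ := hq
      omega

lemma M_succ (ℓ : ℕ) (α β : ℕ → ℕ) (n m : ℕ) :
    M ℓ α β (n + 1) m =
      (if m = 0 then 0 else M ℓ α β n (m - 1)) +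
        ∑ d ∈ Finset.range (ℓ + 1), ccM ℓ α β m d * M ℓ α β n (m + d) := by
  have h1 : M ℓ α β (n + 1) m =
      ∑ p ∈ stepsM ℓ α β m, M ℓ α β n ((m : ℤ) - p.1).toNat := by
    show (ColoredMotzkinSet ℓ α β (n + 1) m).ncard =
      ∑ p ∈ stepsM ℓ α β m, (ColoredMotzkinSet ℓ α β n ((m : ℤ) - p.1).toNat).ncard
    rw [CMS_succ, ncard_biUnion_fin]
    · exact Finset.sum_congr rfl fun p _ =>
        Set.ncard_image_of_injective _ fun L₁ L₂ h => by simpa using h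
    · exact fun p _ => ((CMS_finite ℓ α β n _).image _)
    · intro p hp q hq hpq
      rw [Set.disjoint_left]
      rintro L ⟨L₁, -, rfl⟩ ⟨L₂, -, h⟩
      have := (List.append_inj' h rfl).2
      simp only [List.cons.injEq, and_true] at this
      exact hpq this.symm
  rw [h1, sum_stepsM]

lemma M_zero (ℓ : ℕ) (α β : ℕ → ℕ) (m : ℕ) :
    M ℓ α β 0 m = if m = 0 then 1 else 0 := by
  have h : ColoredMotzkinSet ℓ α β 0 m = if m = 0 then {([] : List (ℤ × ℕ))} else ∅ := by
    ext L
    simp only [ColoredMotzkinSet, Set.mem_setOf_eq, List.length_eq_zero_iff]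
    constructor
    · rintro ⟨rfl, hsum, -⟩
      have hm : m = 0 := by simpa using hsum.symm
      simp [hm]
    · intro hL
      split_ifs at hL with hm
      · subst hm
        simp only [Set.mem_singleton_iff] at hL
        subst hL
        exact ⟨rfl, by simp, by omega⟩
      · cases hL
  show (ColoredMotzkinSet ℓ α β 0 m).ncard = _
  rw [h]
  split_ifs <;> simp

/-- The binomial transform of the `m`-th column of the `(α,β)`-colored Motzkin
triangle is the `m`-th column of the `(α+e₁,β+e₁)`-colored Motzkin triangle. -/
theorem motzkin_binomial_transform (ℓ : ℕ) (hℓ : 1 ≤ ℓ) (m : ℕ) (α β : ℕ → ℕ) (n : ℕ) :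
    (∑ i ∈ Finset.range (n + 1), n.choose i * M ℓ α β i m) =
      M ℓ (fun i => if i = 0 then α 0 + 1 else α i)
          (fun i => if i = 0 then β 0 + 1 else β i) n m := by
  set α' : ℕ → ℕ := fun i => if i = 0 then α 0 + 1 else α i with hα'
  set β' : ℕ → ℕ := fun i => if i = 0 then β 0 + 1 else β i with hβ'
  suffices key : ∀ n m, (∑ i ∈ Finset.range (n + 1), n.choose i * M ℓ α β i m)
      = M ℓ α' β' n m from key n m
  intro n
  induction n with
  | zero =>
    intro m
    simp [M_zero]
  | succ n ih =>
    intro m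
    have h1 : ∑ i ∈ Finset.range (n + 2), (n + 1).choose i * M ℓ α β i m
        = (∑ i ∈ Finset.range (n + 1), n.choose i * M ℓ α β (i + 1) m)
          + ∑ i ∈ Finset.range (n + 2), n.choose i * M ℓ α β i m := by
      rw [Finset.sum_range_succ' (fun i => (n + 1).choose i * M ℓ α β i m),
          Finset.sum_range_succ' (fun i => n.choose i * M ℓ α β i m)]
      simp only [Nat.choose_succ_succ, add_mul, Nat.choose_zero_right]
      rw [Finset.sum_add_distrib]
      ring
    have h2 : ∑ i ∈ Finset.range (n + 2), n.choose i * M ℓ α β i m = M ℓ α' β' n m := by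
      rw [Finset.sum_range_succ, Nat.choose_succ_self]
      simpa using ih m
    have h4 : ∑ i ∈ Finset.range (n + 1), ∑ d ∈ Finset.range (ℓ + 1),
          ccM ℓ α β m d * (n.choose i * M ℓ α β i (m + d))
        = ∑ d ∈ Finset.range (ℓ + 1), ccM ℓ α β m d * M ℓ α' β' n (m + d) := by
      rw [Finset.sum_comm]
      refine Finset.sum_congr rfl fun d _ => ?_
      rw [← Finset.mul_sum, ih (m + d)]
    have h3 : (∑ i ∈ Finset.range (n + 1), n.choose i * M ℓ α β (i + 1) m)
        = (if m = 0 then 0 else M ℓ α' β' n (m - 1))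
          + ∑ d ∈ Finset.range (ℓ + 1), ccM ℓ α β m d * M ℓ α' β' n (m + d) := by
      have e1 : ∀ i ∈ Finset.range (n + 1), n.choose i * M ℓ α β (i + 1) m =
          (if m = 0 then 0 else n.choose i * M ℓ α β i (m - 1))
            + ∑ d ∈ Finset.range (ℓ + 1), ccM ℓ α β m d *
              (n.choose i * M ℓ α β i (m + d)) := by
        intro i _
        rw [M_succ, Nat.mul_add]
        congr 1
        · split_ifs <;> simp
        · rw [Finset.mul_sum]; exact Finset.sum_congr rfl fun d _ => by ring
      rw [Finset.sum_congr rfl e1, Finset.sum_add_distrib, h4]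
      congr 1
      by_cases hm : m = 0
      · simp [hm]
      · simp only [if_neg hm]
        exact ih (m - 1)
    have h6 : ∀ d ∈ Finset.range (ℓ + 1),
        ccM ℓ α' β' m d * M ℓ α' β' n (m + d) =
          ccM ℓ α β m d * M ℓ α' β' n (m + d)
            + (if d = 0 then M ℓ α' β' n (m + d) else 0) := by
      intro d _
      have hcc : ccM ℓ α' β' m d = ccM ℓ α β m d + (if d = 0 then 1 else 0) := by
        unfold ccM
        by_cases hd : d = 0
        · subst hd
          have h0 : (0 : ℕ) ≠ ℓ := by omega
          simp only [hα', hβ', if_neg h0, if_pos rfl]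
          split_ifs <;> ring
        · simp only [hα', hβ', if_neg hd]
          split_ifs <;> ring
      rw [hcc]
      split_ifs <;> ring
    have h7 : ∑ d ∈ Finset.range (ℓ + 1), ccM ℓ α' β' m d * M ℓ α' β' n (m + d)
        = (∑ d ∈ Finset.range (ℓ + 1), ccM ℓ α β m d * M ℓ α' β' n (m + d))
          + M ℓ α' β' n m := by
      rw [Finset.sum_congr rfl h6, Finset.sum_add_distrib]
      congr 1
      rw [Finset.sum_ite_eq' (Finset.range (ℓ + 1)) 0
        (fun d => M ℓ α' β' n (m + d))]
      simp
    rw [h1, h2, h3, M_succ ℓ α' β' n m, h7]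
    ring
end

section
/- Fix k ≥ 2 and 0 ≤ a ≤ k-1. The number D^{k,a}_{n,m} of generalized k-Dyck paths of depth a, semilength n, and semiheight m satisfies, for n ≥ 1: if m ≥ 1 then D^{k,a}_{n,m} = Σ_{j=0}^{k} C(k,j) · D^{k,a}_{n-1,m-1+j}, and if m = 0 then D^{k,a}_{n,0} = Σ_{j=1}^{k} (C(k,j) - C(k-a-1,j)) · D^{k,a}_{n-1,j-1}. -/
open Finset PowerSeries

/-- The set of generalized `k`-Dyck paths of depth `a`, semilength `n` and semiheight `m`:
lattice paths from `(0,0)` to `(k*n, k*m)` using steps `U = (1,1)` and `D_{k-1} = (1,1-k)`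
that stay weakly above the line `y = -a`, encoded as lists of vertical displacements. -/
def DyckSet (k a n m : ℕ) : Set (List ℤ) :=
  {L | L.length = k * n ∧ L.sum = (k : ℤ) * m ∧
    (∀ s ∈ L, s = 1 ∨ s = 1 - (k : ℤ)) ∧
    ∀ i, -(a : ℤ) ≤ (L.take i).sum}

/-- `D k a n m` is the number of generalized `k`-Dyck paths of depth `a`,
semilength `n` and semiheight `m`. -/
noncomputable def D (k a n m : ℕ) : ℕ := Nat.card (DyckSet k a n m)

/-!
Cut a path of semilength `n + 1` after its first `k n` steps. A final block of `k` steps with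
`j` down-steps rises by `k (1 - j)`, so the prefix is a path of semilength `n` and semiheight
`m - 1 + j`, and there are `C(k, j)` such blocks. Given the prefix, the whole path stays above
`-a` iff every suffix of the block rises by at most `a + k m`. For `m ≥ 1` this always holds,
as a suffix rises by at most `k`; for `m = 0` it fails exactly for the `C(k - a - 1, j)` blocks
ending with `a + 1` up-steps.
-/

namespace KDyck

variable {k : ℕ}

theorem le_sum_take_append_iff {M B : List ℤ} {b : ℤ} :
    (∀ i, b ≤ ((M ++ B).take i).sum) ↔
      (∀ i, b ≤ (M.take i).sum) ∧ ∀ i, b ≤ M.sum + (B.take i).sum := by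
  refine ⟨fun h => ⟨fun i => ?_, fun i => ?_⟩, fun ⟨hM, hB⟩ i => ?_⟩
  · rw [List.take_eq_take_min]
    simpa [List.take_append_of_le_length (min_le_right i M.length)] using h (min i M.length)
  · simpa [List.take_append, List.take_of_length_le] using h (M.length + i)
  · rw [List.take_append, List.sum_append]
    rcases le_total i M.length with hi | hi
    · simpa [Nat.sub_eq_zero_of_le hi] using hM i
    · simpa [List.take_of_length_le hi] using hB (i - M.length)

theorem sum_take_add_sum_drop (L : List ℤ) (i : ℕ) : (L.take i).sum + (L.drop i).sum = L.sum := by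
  rw [← List.sum_append, List.take_append_drop]

theorem sum_eq_length_sub_mul_count {L : List ℤ} (hL : ∀ s ∈ L, s = 1 ∨ s = 1 - (k : ℤ)) :
    L.sum = L.length - k * L.count (1 - (k : ℤ)) := by
  induction L with
  | nil => simp
  | cons x L ih =>
    rw [List.forall_mem_cons] at hL
    simp only [List.sum_cons, List.length_cons, List.count_cons, beq_iff_eq, ih hL.2]
    rcases hL.1 with rfl | rfl
    · split_ifs <;> push_cast <;> linarith
    · rw [if_pos rfl]
      push_cast
      ring

theorem sum_le_length {L : List ℤ} (hL : ∀ s ∈ L, s = 1 ∨ s = 1 - (k : ℤ)) :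
    L.sum ≤ L.length := by
  rw [sum_eq_length_sub_mul_count hL]
  have : (0 : ℤ) ≤ k * L.count (1 - (k : ℤ)) := by positivity
  linarith

def stepLists (k : ℕ) : ℕ → ℕ → Finset (List ℤ)
  | 0, 0 => {[]}
  | 0, _ + 1 => ∅
  | N + 1, 0 => (stepLists k N 0).image (List.cons 1)
  | N + 1, j + 1 =>
    (stepLists k N (j + 1)).image (List.cons 1) ∪ (stepLists k N j).image (List.cons (1 - k))

theorem mem_stepLists (hk : k ≠ 0) {N j : ℕ} {L : List ℤ} :
    L ∈ stepLists k N j ↔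
      L.length = N ∧ (∀ s ∈ L, s = 1 ∨ s = 1 - (k : ℤ)) ∧ L.count (1 - (k : ℤ)) = j := by
  induction N generalizing j L with
  | zero => cases j <;> cases L <;> simp [stepLists]
  | succ N ih =>
    cases L with
    | nil => cases j <;> simp [stepLists]
    | cons x L =>
      cases j <;>
        simp only [stepLists, mem_union, mem_image, ih, List.cons.injEq, exists_eq_right_right,
          List.length_cons, Nat.add_right_cancel_iff, List.forall_mem_cons, List.count_cons,
          beq_iff_eq] <;>
        grind

theorem card_stepLists (hk : k ≠ 0) : ∀ N j, (stepLists k N j).card = N.choose j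
  | 0, 0 => rfl
  | 0, _ + 1 => rfl
  | N + 1, 0 => by
    rw [stepLists, card_image_of_injective _ List.cons_injective, card_stepLists hk]
    simp
  | N + 1, j + 1 => by
    rw [stepLists, card_union_of_disjoint, card_image_of_injective _ List.cons_injective,
      card_image_of_injective _ List.cons_injective, card_stepLists hk, card_stepLists hk,
      Nat.choose_succ_succ', add_comm]
    simp [disjoint_left, hk]

theorem forall_sum_drop_le_iff_not_suffix {B : List ℤ}
    (hB : ∀ s ∈ B, s = 1 ∨ s = 1 - (k : ℤ)) (hlen : B.length ≤ k) (a : ℕ) :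
    (∀ i, (B.drop i).sum ≤ a) ↔ ¬ List.replicate (a + 1) 1 <:+ B := by
  constructor
  · rintro h ⟨M, rfl⟩
    simpa using h M.length
  · intro h i
    have hT : ∀ s ∈ B.drop i, s = 1 ∨ s = 1 - (k : ℤ) := fun s hs => hB s (List.mem_of_mem_drop hs)
    have hTlen : (B.drop i).length ≤ k := by
      simp only [List.length_drop]
      omega
    rw [sum_eq_length_sub_mul_count hT]
    rcases Nat.eq_zero_or_pos ((B.drop i).count (1 - (k : ℤ))) with h0 | hpos
    · have hones : B.drop i = List.replicate (B.drop i).length 1 :=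
        List.eq_replicate_iff.mpr ⟨rfl, fun s hs =>
          (hT s hs).resolve_right fun hs' => List.count_eq_zero.mp h0 (hs' ▸ hs)⟩
      by_contra! hlt
      refine h (List.IsSuffix.trans ?_ (List.drop_suffix i B))
      rw [hones, List.suffix_replicate_iff]
      simp only [h0] at hlt
      exact ⟨by simp only [List.length_replicate]; omega, by simp⟩
    · -- a suffix containing a down-step rises by at most its length minus `k`, which is `≤ 0`
      have : (k : ℤ) ≤ k * (B.drop i).count (1 - (k : ℤ)) := by
        exact_mod_cast Nat.le_mul_of_pos_right k hpos
      have : ((B.drop i).length : ℤ) ≤ k := by exact_mod_cast hTlen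
      omega

theorem append_replicate_one_mem_stepLists_iff (hk : k ≠ 0) {M : List ℤ} {N r j : ℕ} :
    M ++ List.replicate r 1 ∈ stepLists k (N + r) j ↔ M ∈ stepLists k N j := by
  have hne : ((1 : ℤ) == 1 - k) = false := by
    simp only [beq_eq_false_iff_ne, ne_eq]
    omega
  simp only [mem_stepLists hk, List.length_append, List.length_replicate, List.forall_mem_append,
    List.forall_mem_replicate, List.count_append, List.count_replicate, hne]
  simp

open Classical in
noncomputable def goodBlocks (k a m j : ℕ) : Finset (List ℤ) :=
  {B ∈ stepLists k k j | ∀ i, (B.drop i).sum ≤ a + k * m}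

theorem mem_goodBlocks {a m j : ℕ} {B : List ℤ} :
    B ∈ goodBlocks k a m j ↔ B ∈ stepLists k k j ∧ ∀ i, (B.drop i).sum ≤ a + k * m := by
  simp [goodBlocks]

theorem goodBlocks_of_one_le (hk : k ≠ 0) {a m : ℕ} (hm : 1 ≤ m) (j : ℕ) :
    goodBlocks k a m j = stepLists k k j := by
  ext B
  rw [mem_goodBlocks, and_iff_left_iff_imp]
  intro hB i
  obtain ⟨hlen, hsteps, -⟩ := (mem_stepLists hk).mp hB
  have hkm : k ≤ a + k * m := le_add_left (Nat.le_mul_of_pos_right k hm)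
  calc (B.drop i).sum
      ≤ (B.drop i).length := sum_le_length fun s hs => hsteps s (List.mem_of_mem_drop hs)
    _ ≤ a + k * m := by
      rw [List.length_drop, hlen]
      exact_mod_cast (Nat.sub_le k i).trans hkm

theorem card_goodBlocks_zero {a : ℕ} (ha : a < k) (j : ℕ) :
    (goodBlocks k a 0 j).card = k.choose j - (k - a - 1).choose j := by
  have hk : k ≠ 0 := by omega
  have hsplit : k - a - 1 + (a + 1) = k := by omega
  set bad := (stepLists k (k - a - 1) j).image (· ++ List.replicate (a + 1) (1 : ℤ))
  have hbad : bad ⊆ stepLists k k j := by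
    intro B hB
    obtain ⟨M, hM, rfl⟩ := mem_image.mp hB
    simpa only [hsplit] using (append_replicate_one_mem_stepLists_iff (r := a + 1) hk).mpr hM
  have hgood : goodBlocks k a 0 j = stepLists k k j \ bad := by
    ext B
    rw [mem_goodBlocks, mem_sdiff]
    refine and_congr_right fun hB => ?_
    obtain ⟨hlen, hsteps, -⟩ := (mem_stepLists hk).mp hB
    rw [Nat.cast_zero, mul_zero, add_zero,
      forall_sum_drop_le_iff_not_suffix hsteps hlen.le]
    refine not_congr ⟨fun ⟨M, hMB⟩ => mem_image.mpr ⟨M, ?_, hMB⟩, fun hB' => ?_⟩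
    · rw [← append_replicate_one_mem_stepLists_iff hk, hsplit, hMB]
      exact hB
    · obtain ⟨M, -, hMB⟩ := mem_image.mp hB'
      exact ⟨M, hMB⟩
  rw [hgood, card_sdiff_of_subset hbad, card_image_of_injective _ (List.append_left_injective _),
    card_stepLists hk, card_stepLists hk]

theorem finite_dyckSet (hk : k ≠ 0) (a n m : ℕ) : (DyckSet k a n m).Finite := by
  refine ((range (k * n + 1)).biUnion (stepLists k (k * n))).finite_toSet.subset fun L hL => ?_
  obtain ⟨hlen, -, hsteps, -⟩ := hL
  rw [mem_coe, mem_biUnion]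
  exact ⟨_, mem_range.mpr (Nat.lt_succ_of_le (hlen ▸ List.count_le_length)),
    (mem_stepLists hk).mpr ⟨hlen, hsteps, rfl⟩⟩

theorem D_eq_card (hk : k ≠ 0) (a n m : ℕ) :
    D k a n m = (finite_dyckSet hk a n m).toFinset.card :=
  Nat.card_eq_card_finite_toFinset _

theorem drop_mem_goodBlocks (hk : k ≠ 0) {a n m : ℕ} {L : List ℤ}
    (hL : L ∈ DyckSet k a (n + 1) m) :
    L.drop (k * n) ∈ goodBlocks k a m ((L.drop (k * n)).count (1 - (k : ℤ))) := by
  obtain ⟨hlen, hsum, hsteps, hpre⟩ := hL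
  rw [← List.take_append_drop (k * n) L] at hsum hpre
  rw [List.sum_append] at hsum
  have hpost := (le_sum_take_append_iff.mp hpre).2
  rw [mem_goodBlocks, mem_stepLists hk]
  refine ⟨⟨by simp [hlen, Nat.mul_succ], fun s hs => hsteps s (List.mem_of_mem_drop hs), rfl⟩,
    fun i => ?_⟩
  linarith [hpost i, sum_take_add_sum_drop (L.drop (k * n)) i]

theorem append_mem_dyckSet_iff (hk : k ≠ 0) {a n m j c : ℕ} {M B : List ℤ}
    (hM : M.length = k * n) (hB : B ∈ goodBlocks k a m j) (hc : c + 1 = m + j) :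
    M ++ B ∈ DyckSet k a (n + 1) m ↔ M ∈ DyckSet k a n c := by
  obtain ⟨hB, hBgood⟩ := mem_goodBlocks.mp hB
  obtain ⟨hBlen, hBsteps, hBcount⟩ := (mem_stepLists hk).mp hB
  have hBsum : B.sum = k - k * j := by rw [sum_eq_length_sub_mul_count hBsteps, hBlen, hBcount]
  have hc' : (c : ℤ) = m + j - 1 := by omega
  simp only [DyckSet, Set.mem_ofPred_eq, List.length_append, List.sum_append,
    List.forall_mem_append, le_sum_take_append_iff, hM, hBlen]
  constructor
  · rintro ⟨-, hsum, ⟨hMsteps, -⟩, hpre, -⟩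
    exact ⟨trivial, by linear_combination hsum - hBsum - k * hc', hMsteps, hpre⟩
  · rintro ⟨-, hsum, hMsteps, hpre⟩
    have htotal : M.sum + B.sum = k * m := by linear_combination hsum + hBsum + k * hc'
    refine ⟨by ring, htotal, ⟨hMsteps, hBsteps⟩, hpre, fun i => ?_⟩
    linarith [hBgood i, sum_take_add_sum_drop B i]

theorem D_succ_eq_sum (hk : k ≠ 0) {a n m : ℕ} (J : Finset ℕ) (c : ℕ → ℕ)
    (hc : ∀ j ∈ J, c j + 1 = m + j) (hJ : ∀ j ∉ J, goodBlocks k a m j = ∅) :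
    D k a (n + 1) m = ∑ j ∈ J, D k a n (c j) * (goodBlocks k a m j).card := by
  set P : ℕ → Finset (List ℤ) := fun c => (finite_dyckSet hk a n c).toFinset
  set blocks : ℕ → Finset (List ℤ) := fun j =>
    (P (c j) ×ˢ goodBlocks k a m j).image fun p => p.1 ++ p.2
  have hsplit : (finite_dyckSet hk a (n + 1) m).toFinset = J.biUnion blocks := by
    ext L
    simp only [blocks, P, Set.Finite.mem_toFinset, mem_biUnion, mem_image, mem_product,
      Prod.exists]
    constructor
    · intro hL
      have hB := drop_mem_goodBlocks hk hL
      have hj : (L.drop (k * n)).count (1 - (k : ℤ)) ∈ J := by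
        by_contra hj
        simp [hJ _ hj] at hB
      have hM : (L.take (k * n)).length = k * n := by
        simp [hL.1, Nat.mul_succ]
      refine ⟨_, hj, L.take (k * n), L.drop (k * n), ⟨?_, hB⟩, L.take_append_drop _⟩
      rw [← append_mem_dyckSet_iff hk hM hB (hc _ hj), List.take_append_drop]
      exact hL
    · rintro ⟨j, hj, M, B, ⟨hM, hB⟩, rfl⟩
      exact (append_mem_dyckSet_iff hk hM.1 hB (hc j hj)).mpr hM
  have hcount : ∀ j, ∀ L ∈ blocks j, (L.drop (k * n)).count (1 - (k : ℤ)) = j := by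
    intro j L hL
    obtain ⟨⟨M, B⟩, hMB, rfl⟩ := mem_image.mp hL
    rw [mem_product, Set.Finite.mem_toFinset] at hMB
    rw [← hMB.1.1, List.drop_left]
    exact ((mem_stepLists hk).mp (mem_goodBlocks.mp hMB.2).1).2.2
  rw [D_eq_card hk, hsplit, card_biUnion]
  · refine sum_congr rfl fun j _ => ?_
    rw [card_image_of_injOn, card_product, D_eq_card hk]
    rintro ⟨M, B⟩ hMB ⟨M', B'⟩ hMB' h
    simp only [P, coe_product, Set.mem_prod, mem_coe, Set.Finite.mem_toFinset] at hMB hMB'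
    obtain ⟨rfl, rfl⟩ := List.append_inj h (hMB.1.1.trans hMB'.1.1.symm)
    rfl
  · intro j _ j' _ hjj'
    exact disjoint_left.mpr fun L hL hL' => hjj' ((hcount j L hL).symm.trans (hcount j' L hL'))

end KDyck

open KDyck

/-- Recursion for generalized `k`-Dyck paths of depth `a`. -/
theorem dyck_recursion (k a : ℕ) (hk : 2 ≤ k) (ha : a ≤ k - 1) (n : ℕ) (hn : 1 ≤ n) :
    (∀ m : ℕ, 1 ≤ m →
      D k a n m = ∑ j ∈ Finset.range (k + 1), k.choose j * D k a (n - 1) (m - 1 + j)) ∧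
    D k a n 0 =
      ∑ j ∈ Finset.Icc 1 k, (k.choose j - (k - a - 1).choose j) * D k a (n - 1) (j - 1) := by
  have hk0 : k ≠ 0 := by omega
  have hak : a < k := by omega
  obtain ⟨n, rfl⟩ : ∃ n', n = n' + 1 := ⟨n - 1, by omega⟩
  rw [Nat.add_sub_cancel]
  refine ⟨fun m hm => ?_, ?_⟩
  · rw [D_succ_eq_sum hk0 (range (k + 1)) (fun j => m - 1 + j) (fun j _ => by omega)]
    · refine sum_congr rfl fun j _ => ?_
      rw [goodBlocks_of_one_le hk0 hm, card_stepLists hk0, mul_comm]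
    · intro j hj
      rw [goodBlocks_of_one_le hk0 hm, ← card_eq_zero, card_stepLists hk0]
      exact Nat.choose_eq_zero_of_lt (by simpa using hj)
  · rw [D_succ_eq_sum hk0 (Icc 1 k) (fun j => j - 1) (fun j hj => by simp at hj; omega)]
    · refine sum_congr rfl fun j _ => ?_
      rw [card_goodBlocks_zero hak, mul_comm]
    · intro j hj
      rw [← card_eq_zero, card_goodBlocks_zero hak]
      rcases Nat.eq_zero_or_pos j with rfl | hpos
      · simp
      · have hkj : k < j := by
          simp only [mem_Icc, not_and_or, not_le] at hj
          omega
        rw [Nat.choose_eq_zero_of_lt hkj, Nat.choose_eq_zero_of_lt (by omega)]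
end

section
/- Fix k ≥ 2 and 0 ≤ a ≤ k-1. The generating function Σ_n D^{k,a}_{n,0} t^n for generalized k-Dyck paths of depth a and semiheight 0 equals C_k(t)^{a+1}, where C_k(t) is the unique formal power series with constant term 1 satisfying C_k(t) = 1 + t·C_k(t)^k. In particular, D^{k,a}_{n,0} = ((a+1)/(kn+a+1))·C(kn+a+1, n). -/
/-!
Rotating a Dyck path of depth `a` by a half-turn (reversing its steps and negating them) and
appending `a + 1` down-steps gives a path with steps `-1` and `k - 1` that first reaches
`-(a + 1)` at its last step; conversely, as `a + 1 ≤ k`, the last `a + 1` steps of such a path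
are all `-1`. Splitting first-passage paths at their first step gives the recursion
`q(m+1, n+1) = q(m, n+1) + q(m+k, n)`, which the coefficients of `C^m` satisfy as well because
`C^(m+1) = C^m + t·C^(m+k)`, and which, through Pascal's rule, also yields
`(kn + m)·q(m, n) = m·binom(kn + m, n)`.
-/
open Finset PowerSeries

def firstPassagePaths (k m n : ℕ) : Set (List ℤ) :=
  {L | L.length = m + k * n ∧ L.sum = -(m : ℤ) ∧
    (∀ s ∈ L, s = -1 ∨ s = (k : ℤ) - 1) ∧
    ∀ i < L.length, -(m : ℤ) < (L.take i).sum}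

def firstPassageCount (k : ℕ) : ℕ → ℕ → ℕ
  | _, 0 => 1
  | 0, _ + 1 => 0
  | m + 1, n + 1 => firstPassageCount k m (n + 1) + firstPassageCount k (m + k) n
termination_by m n => (n, m)

section
variable {k : ℕ}

theorem sum_add_length_eq_mul_count (hk : 0 < k) {L : List ℤ}
    (hL : ∀ s ∈ L, s = -1 ∨ s = (k : ℤ) - 1) :
    L.sum + L.length = k * L.count ((k : ℤ) - 1) := by
  induction L with
  | nil => simp
  | cons s T ih =>
    have hT := ih fun x hx => hL x (List.mem_cons_of_mem _ hx)
    rcases hL s List.mem_cons_self with rfl | rfl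
    · have : (-1 : ℤ) ≠ k - 1 := by omega
      simp [this]
      linarith
    · simp
      linarith

theorem eq_replicate_of_sum_add_length_lt (hk : 0 < k) {L : List ℤ}
    (hL : ∀ s ∈ L, s = -1 ∨ s = (k : ℤ) - 1) (hlt : L.sum + L.length < k) :
    L = List.replicate L.length (-1) := by
  have hcount : L.count ((k : ℤ) - 1) = 0 := by
    have := sum_add_length_eq_mul_count hk hL
    by_contra h
    have : (k : ℤ) ≤ k * L.count ((k : ℤ) - 1) :=
      le_mul_of_one_le_right (by omega) (by exact_mod_cast Nat.one_le_iff_ne_zero.2 h)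
    omega
  refine List.eq_replicate_iff.2 ⟨rfl, fun b hb => (hL b hb).resolve_right ?_⟩
  rintro rfl
  exact List.count_eq_zero.1 hcount hb

theorem sum_take_replicate_neg_one (i j : ℕ) :
    ((List.replicate j (-1 : ℤ)).take i).sum = -(min i j : ℕ) := by
  simp [List.take_replicate, List.sum_replicate]

theorem forall_lt_sum_take_cons_iff {c s : ℤ} {T : List ℤ} :
    (∀ i < T.length + 1, c < ((s :: T).take i).sum) ↔
      c < 0 ∧ ∀ i < T.length, c < s + (T.take i).sum := by
  rw [Nat.forall_lt_succ_left]
  simp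

theorem firstPassagePaths_zero_right (hk : 0 < k) (m : ℕ) :
    firstPassagePaths k m 0 = {List.replicate m (-1)} := by
  ext L
  simp only [firstPassagePaths, Set.mem_ofPred_eq, Set.mem_singleton_iff, mul_zero, add_zero]
  constructor
  · rintro ⟨hl, hs, he, -⟩
    rw [eq_replicate_of_sum_add_length_lt hk he (by omega), hl]
  · rintro rfl
    refine ⟨List.length_replicate, by simp [List.sum_replicate],
      fun s hs => Or.inl (List.eq_of_mem_replicate hs), fun i hi => ?_⟩
    rw [sum_take_replicate_neg_one]
    simp only [List.length_replicate] at hi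
    omega

theorem firstPassagePaths_zero_succ (hk : 0 < k) (n : ℕ) :
    firstPassagePaths k 0 (n + 1) = ∅ := by
  refine Set.eq_empty_of_forall_notMem ?_
  rintro L ⟨hl, -, -, hp⟩
  have := hp 0 (by rw [hl]; positivity)
  simp at this

theorem cons_neg_one_mem_firstPassagePaths_iff {m n : ℕ} {T : List ℤ} :
    -1 :: T ∈ firstPassagePaths k (m + 1) n ↔ T ∈ firstPassagePaths k m n := by
  simp only [firstPassagePaths, Set.mem_ofPred_eq, forall_lt_sum_take_cons_iff,
    List.mem_cons, forall_eq_or_imp, List.length_cons, List.sum_cons]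
  push_cast
  constructor
  · rintro ⟨hl, hs, ⟨-, he⟩, -, hp⟩
    exact ⟨by omega, by omega, he, fun i hi => by linarith [hp i hi]⟩
  · rintro ⟨hl, hs, he, hp⟩
    exact ⟨by omega, by omega, ⟨by simp, he⟩, by omega, fun i hi => by linarith [hp i hi]⟩

theorem cons_sub_one_mem_firstPassagePaths_iff {m n : ℕ} {T : List ℤ} :
    ((k : ℤ) - 1) :: T ∈ firstPassagePaths k (m + 1) (n + 1) ↔
      T ∈ firstPassagePaths k (m + k) n := by
  simp only [firstPassagePaths, Set.mem_ofPred_eq, forall_lt_sum_take_cons_iff,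
    List.mem_cons, forall_eq_or_imp, List.length_cons, List.sum_cons]
  push_cast
  constructor
  · rintro ⟨hl, hs, ⟨-, he⟩, -, hp⟩
    exact ⟨by linarith, by linarith, he, fun i hi => by linarith [hp i hi]⟩
  · rintro ⟨hl, hs, he, hp⟩
    exact ⟨by linarith, by linarith, ⟨by simp, he⟩, by omega, fun i hi => by linarith [hp i hi]⟩

theorem firstPassagePaths_succ_succ (m n : ℕ) :
    firstPassagePaths k (m + 1) (n + 1) =
      List.cons (-1) '' firstPassagePaths k m (n + 1) ∪
        List.cons ((k : ℤ) - 1) '' firstPassagePaths k (m + k) n := by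
  ext L
  constructor
  · intro hL
    obtain ⟨s, T, rfl⟩ := List.exists_cons_of_length_pos (by rw [hL.1]; omega)
    rcases hL.2.2.1 s List.mem_cons_self with rfl | rfl
    · exact Or.inl ⟨T, cons_neg_one_mem_firstPassagePaths_iff.1 hL, rfl⟩
    · exact Or.inr ⟨T, cons_sub_one_mem_firstPassagePaths_iff.1 hL, rfl⟩
  · rintro (⟨T, hT, rfl⟩ | ⟨T, hT, rfl⟩)
    · exact cons_neg_one_mem_firstPassagePaths_iff.2 hT
    · exact cons_sub_one_mem_firstPassagePaths_iff.2 hT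

theorem encard_firstPassagePaths (hk : 0 < k) (m n : ℕ) :
    (firstPassagePaths k m n).encard = firstPassageCount k m n := by
  induction n generalizing m with
  | zero => simp [firstPassagePaths_zero_right hk, firstPassageCount]
  | succ n ihn =>
    induction m with
    | zero => simp [firstPassagePaths_zero_succ hk, firstPassageCount]
    | succ m ihm =>
      have hdisj : Disjoint (List.cons (-1) '' firstPassagePaths k m (n + 1))
          (List.cons ((k : ℤ) - 1) '' firstPassagePaths k (m + k) n) := by
        rw [Set.disjoint_left]
        rintro _ ⟨T, -, rfl⟩ ⟨S, -, hS⟩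
        have := List.head_eq_of_cons_eq hS
        omega
      rw [firstPassagePaths_succ_succ, Set.encard_union_eq hdisj,
        List.cons_injective.encard_image, List.cons_injective.encard_image, ihm, ihn,
        firstPassageCount]
      push_cast
      rfl

theorem firstPassageCount_mul_eq (hk : 0 < k) (m n : ℕ) :
    (k * n + m) * firstPassageCount k m n = m * (k * n + m).choose n := by
  induction n generalizing m with
  | zero => simp [firstPassageCount]
  | succ n ihn =>
    induction m with
    | zero => simp [firstPassageCount]
    | succ m ihm =>
      obtain ⟨M, hM⟩ : ∃ M, M = k * n + m + k := ⟨_, rfl⟩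
      have h₁ := ihm
      have h₂ := ihn (m + k)
      rw [show k * (n + 1) + m = M by rw [hM]; ring] at h₁
      rw [show k * n + (m + k) = M by rw [hM]; ring] at h₂
      have hpascal := Nat.choose_succ_succ' M n
      have habsorb := Nat.add_one_mul_choose_eq M n
      rw [firstPassageCount, show k * (n + 1) + (m + 1) = M + 1 by rw [hM]; ring]
      apply Nat.eq_of_mul_eq_mul_left (show 0 < M by omega)
      zify at *
      linear_combination (M + 1 : ℤ) * (h₁ + h₂) - (M + 1 : ℤ) * m * hpascal
        + k * habsorb - ((M + 1).choose (n + 1) : ℤ) * hM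

theorem coeff_pow_eq_firstPassageCount {R : Type*} [CommSemiring R] {C : R⟦X⟧}
    (hC : C = 1 + X * C ^ k) (m n : ℕ) :
    coeff n (C ^ m) = firstPassageCount k m n := by
  induction n generalizing m with
  | zero =>
    have h₀ : constantCoeff C = 1 := by rw [hC]; simp
    simp [firstPassageCount, h₀]
  | succ n ihn =>
    induction m with
    | zero => simp [firstPassageCount, coeff_one]
    | succ m ihm =>
      have hpow : C ^ (m + 1) = C ^ m + X * C ^ (m + k) := by
        calc C ^ (m + 1) = C ^ m * C := pow_succ C m
          _ = C ^ m * (1 + X * C ^ k) := by rw [← hC]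
          _ = C ^ m + X * C ^ (m + k) := by ring
      rw [hpow, map_add, coeff_succ_X_mul, ihm, ihn, firstPassageCount]
      push_cast
      rfl

def reversePath (L : List ℤ) : List ℤ := (L.map (fun x => -x)).reverse

@[simp] theorem length_reversePath (L : List ℤ) : (reversePath L).length = L.length := by
  simp [reversePath]

@[simp] theorem sum_reversePath (L : List ℤ) : (reversePath L).sum = -L.sum := by
  simp [reversePath, List.sum_neg]

@[simp] theorem mem_reversePath {s : ℤ} {L : List ℤ} : s ∈ reversePath L ↔ -s ∈ L := by
  simp [reversePath, neg_eq_iff_eq_neg]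

@[simp] theorem reversePath_reversePath (L : List ℤ) : reversePath (reversePath L) = L := by
  simp [reversePath, List.map_reverse]

theorem reversePath_injective : Function.Injective reversePath :=
  Function.LeftInverse.injective reversePath_reversePath

theorem sum_take_reversePath (L : List ℤ) (i : ℕ) :
    ((reversePath L).take i).sum = (L.take (L.length - i)).sum - L.sum := by
  rw [reversePath, List.take_reverse, List.sum_reverse, List.length_map, ← List.map_drop,
    ← List.sum_neg, ← L.sum_take_add_sum_drop (L.length - i)]
  ring

theorem le_sum_take_reversePath {c : ℤ} {L : List ℤ} (hsum : L.sum = 0)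
    (h : ∀ i, c ≤ (L.take i).sum) (i : ℕ) : c ≤ ((reversePath L).take i).sum := by
  rw [sum_take_reversePath, hsum, sub_zero]
  exact h _

def reflectedDyckSet (k a n : ℕ) : Set (List ℤ) :=
  {P | P.length = k * n ∧ P.sum = 0 ∧ (∀ s ∈ P, s = -1 ∨ s = (k : ℤ) - 1) ∧
    ∀ i, -(a : ℤ) ≤ (P.take i).sum}

theorem image_reversePath_dyckSet (a n : ℕ) :
    reversePath '' DyckSet k a n 0 = reflectedDyckSet k a n := by
  refine subset_antisymm ?_ fun P hP => ⟨reversePath P, ?_, reversePath_reversePath P⟩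
  · rintro _ ⟨L, ⟨hl, hs, he, hp⟩, rfl⟩
    rw [Nat.cast_zero, mul_zero] at hs
    refine ⟨by simp [hl], by simp [hs], fun s hs => ?_, le_sum_take_reversePath hs hp⟩
    rcases he _ (mem_reversePath.1 hs) with h | h <;> [left; right] <;> linarith
  · obtain ⟨hl, hs, he, hp⟩ := hP
    refine ⟨by simp [hl], by simp [hs], fun s hs => ?_, le_sum_take_reversePath hs hp⟩
    rcases he _ (mem_reversePath.1 hs) with h | h <;> [left; right] <;> linarith

theorem append_replicate_mem_firstPassagePaths_iff {a n : ℕ} {P : List ℤ} :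
    P ++ List.replicate (a + 1) (-1) ∈ firstPassagePaths k (a + 1) n ↔
      P ∈ reflectedDyckSet k a n := by
  simp only [firstPassagePaths, reflectedDyckSet, Set.mem_ofPred_eq, List.length_append,
    List.length_replicate, List.sum_append, List.sum_replicate, smul_neg, nsmul_one,
    List.mem_append, List.mem_replicate, List.take_append, sum_take_replicate_neg_one]
  constructor
  · rintro ⟨hl, hs, he, hp⟩
    refine ⟨by omega, by linarith, fun s hs => he s (Or.inl hs), fun i => ?_⟩
    rcases lt_or_ge i P.length with hi | hi
    · have := hp i (by omega)
      rw [Nat.sub_eq_zero_of_le hi.le] at this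
      simp only [zero_le, min_eq_left, Nat.cast_zero, neg_zero, add_zero] at this
      omega
    · rw [List.take_of_length_le hi]
      omega
  · rintro ⟨hl, hs, he, hp⟩
    refine ⟨by omega, by push_cast; linarith, ?_, fun i hi => ?_⟩
    · rintro s (hs | ⟨-, rfl⟩)
      exacts [he s hs, Or.inl rfl]
    rcases le_or_gt i P.length with hi' | hi'
    · rw [Nat.sub_eq_zero_of_le hi']
      simp only [zero_le, min_eq_left, Nat.cast_zero, neg_zero, add_zero]
      have := hp i
      omega
    · rw [List.take_of_length_le hi'.le, hs, min_eq_left (by omega)]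
      omega

theorem eq_take_append_replicate_of_mem_firstPassagePaths {a n : ℕ} (hak : a + 1 ≤ k)
    {M : List ℤ} (hM : M ∈ firstPassagePaths k (a + 1) n) :
    M = M.take (k * n) ++ List.replicate (a + 1) (-1) := by
  obtain ⟨hl, hs, he, hp⟩ := hM
  set S := M.drop (k * n) with hS
  have hSl : S.length = a + 1 := by rw [hS, List.length_drop]; omega
  -- the last `a + 1 ≤ k` steps descend overall, so none of them can be an up-step `k - 1`
  have hSs : S.sum < 0 := by
    have := hp (k * n) (by omega)
    have := M.sum_take_add_sum_drop (k * n)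
    push_cast at *
    linarith
  have hSe : ∀ s ∈ S, s = -1 ∨ s = (k : ℤ) - 1 := fun s hs => he s (List.mem_of_mem_drop hs)
  have hrep := eq_replicate_of_sum_add_length_lt (by omega) hSe (by rw [hSl]; push_cast; omega)
  rw [hSl] at hrep
  rw [← hrep, List.take_append_drop]

theorem image_append_replicate_reflectedDyckSet {a n : ℕ} (hak : a + 1 ≤ k) :
    (· ++ List.replicate (a + 1) (-1)) '' reflectedDyckSet k a n =
      firstPassagePaths k (a + 1) n := by
  refine subset_antisymm ?_ fun M hM => ?_
  · rintro _ ⟨P, hP, rfl⟩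
    exact append_replicate_mem_firstPassagePaths_iff.2 hP
  · have hsplit := eq_take_append_replicate_of_mem_firstPassagePaths hak hM
    rw [hsplit] at hM
    exact ⟨_, append_replicate_mem_firstPassagePaths_iff.1 hM, hsplit.symm⟩

theorem encard_dyckSet {a n : ℕ} (hak : a + 1 ≤ k) :
    (DyckSet k a n 0).encard = firstPassageCount k (a + 1) n := by
  rw [← encard_firstPassagePaths (by omega), ← image_append_replicate_reflectedDyckSet hak,
    ← image_reversePath_dyckSet, (List.append_left_injective _).encard_image,
    reversePath_injective.encard_image]

end

theorem dyck_gf_general (k a : ℕ) (hk : 2 ≤ k) (ha : a ≤ k - 1) (Ck : PowerSeries ℚ)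
    (h2 : Ck = 1 + PowerSeries.X * Ck ^ k) :
    PowerSeries.mk (fun n => (D k a n 0 : ℚ)) = Ck ^ (a + 1) ∧
    ∀ n : ℕ, (D k a n 0 : ℚ) =
      ((a + 1 : ℚ) / (k * n + a + 1)) * ((k * n + a + 1).choose n : ℚ) := by
  have hD (n : ℕ) : D k a n 0 = firstPassageCount k (a + 1) n := by
    rw [D, Nat.card_coe_set_eq, Set.ncard_def, encard_dyckSet (by omega), ENat.toNat_natCast]
  refine ⟨PowerSeries.ext fun n => ?_, fun n => ?_⟩
  · rw [coeff_mk, hD, coeff_pow_eq_firstPassageCount h2]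
  · have hmul := firstPassageCount_mul_eq (k := k) (by omega) (a + 1) n
    rw [← add_assoc] at hmul
    rw [hD, div_mul_eq_mul_div, eq_div_iff (by positivity)]
    exact_mod_cast (mul_comm _ _).trans hmul

/-- The generating function of depth-`a` generalized `k`-Dyck paths of semiheight `0`
is `C_k(t)^(a+1)`, and `D_{n,0}^{k,a} = ((a+1)/(kn+a+1))·C(kn+a+1,n)`. -/
theorem dyck_gf (k a : ℕ) (hk : 2 ≤ k) (ha : a ≤ k - 1) (Ck : PowerSeries ℚ)
    (h1 : PowerSeries.constantCoeff Ck = 1)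
    (h2 : Ck = 1 + PowerSeries.X * Ck ^ k) :
    PowerSeries.mk (fun n => (D k a n 0 : ℚ)) = Ck ^ (a + 1) ∧
    ∀ n : ℕ, (D k a n 0 : ℚ) =
      ((a + 1 : ℚ) / (k * n + a + 1)) * ((k * n + a + 1).choose n : ℚ) :=
  dyck_gf_general k a hk ha Ck h2
end

section
/- Fix k ≥ 2, 0 ≤ a ≤ k-1, and 1 ≤ r ≤ k-1. The number F^{k,a,r}_{n,m} of generalized (k,r)-Fine paths of depth a, semilength n, and semiheight m satisfies, for n ≥ 1: if m ≥ 1 then F^{k,a,r}_{n,m} = Σ_{j=0}^{k} C(k,j)·F^{k,a,r}_{n-1,m-1+j}, and if m = 0 then F^{k,a,r}_{n,0} = Σ_{j=1}^{k} (C(k,j) - C(k-a-1,j) - C(k-r-1,j-1)) · F^{k,a,r}_{n-1,j-1}. -/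
open Finset PowerSeries

/-- `HasHill k r L` holds when the path `L` contains a subpath `U^r D_{k-1}`
(`r` consecutive up steps followed by one maximal down step) ending at height `0`. -/
def HasHill (k r : ℕ) (L : List ℤ) : Prop :=
  ∃ i, i + r < L.length ∧ (∀ j < r, L.getD (i + j) 0 = 1) ∧
    L.getD (i + r) 0 = 1 - (k : ℤ) ∧ (L.take (i + r + 1)).sum = 0

/-- `F k a r n m` is the number of generalized `(k,r)`-Fine paths of depth `a`,
semilength `n` and semiheight `m`: generalized `k`-Dyck paths with no subpath
`U^r D_{k-1}` ending at height `0`. -/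
noncomputable def F (k a r n m : ℕ) : ℕ :=
  Nat.card {L | L ∈ DyckSet k a n m ∧ ¬ HasHill k r L}

/-!
Cut a path of semilength `n + 1` into its first `k n` steps and a last block of `k` steps,
recorded by the set `s ⊆ {0, …, k-1}` of its down-step positions; the block has height
`k (1 - #s)`, so the prefix is a path of semiheight `m + #s - 1`. Every step is `≡ 1 (mod k)`,
so a path at height `0` has made a multiple of `k` steps: since `r < k`, a hill either lies in
the prefix or is the tail `U^r D_{k-1}` of the last block, and then `m = 0`. Hence whether a
block may end a Fine path depends only on `m` and `s`. For `m ≥ 1` every block may; for `m = 0`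
the block must contain a down step at a position `≥ k - a - 1` (after the last down step the path
is at height `i + 1 - k`, `i` that step's position) and must not end in `U^r D_{k-1}`, which
excludes `C(k-a-1, j) + C(k-r-1, j-1)` of the `C(k, j)` blocks with `j` down steps.
-/

namespace FinePath

theorem dvd_sum_sub_length {k : ℤ} {L : List ℤ} (h : ∀ x ∈ L, k ∣ x - 1) :
    k ∣ L.sum - L.length := by
  induction L with
  | nil => simp
  | cons x L ih =>
    simp only [List.forall_mem_cons] at h
    have hsplit : (x :: L).sum - (x :: L).length = (x - 1) + (L.sum - L.length) := by
      simp only [List.sum_cons, List.length_cons, Nat.cast_add, Nat.cast_one]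
      ring
    exact hsplit ▸ dvd_add h.1 (ih h.2)

theorem dvd_of_sum_take_eq_zero {k t : ℕ} {L : List ℤ} (hL : ∀ x ∈ L, x = 1 ∨ x = 1 - (k : ℤ))
    (ht : t ≤ L.length) (h0 : (L.take t).sum = 0) : k ∣ t := by
  have hstep : ∀ x ∈ L.take t, (k : ℤ) ∣ x - 1 := fun x hx => by
    rcases hL x (List.mem_of_mem_take hx) with rfl | rfl <;> simp
  have := dvd_sum_sub_length hstep
  rw [h0, List.length_take_of_le ht, zero_sub, dvd_neg] at this
  exact_mod_cast this

theorem forall_le_sum_take_append {c : ℤ} {P B : List ℤ} :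
    (∀ i, c ≤ ((P ++ B).take i).sum) ↔
      (∀ i, c ≤ (P.take i).sum) ∧ ∀ j ≤ B.length, c ≤ P.sum + (B.take j).sum := by
  simp only [List.take_append, List.sum_append]
  refine ⟨fun h => ⟨fun i => ?_, fun j _ => ?_⟩, fun ⟨hP, hB⟩ i => ?_⟩
  · rcases le_total i P.length with hi | hi
    · simpa [Nat.sub_eq_zero_of_le hi] using h i
    · simpa [List.take_of_length_le hi, List.take_length] using h P.length
  · simpa [List.take_of_length_le (Nat.le_add_right _ j)] using h (P.length + j)
  · rcases le_total i P.length with hi | hi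
    · simpa [Nat.sub_eq_zero_of_le hi] using hP i
    · rw [List.take_of_length_le hi, List.take_eq_take_min]
      exact hB _ (min_le_right _ _)

theorem finite_setOf_steps (k N : ℕ) :
    {L : List ℤ | L.length = N ∧ ∀ x ∈ L, x = 1 ∨ x = 1 - (k : ℤ)}.Finite := by
  refine ((List.finite_length_eq Bool N).image
    (List.map fun b => if b then 1 - (k : ℤ) else 1)).subset ?_
  rintro L ⟨hlen, hL⟩
  refine ⟨L.map fun x => decide (x = 1 - (k : ℤ)), by simpa using hlen, ?_⟩
  rw [List.map_map]
  refine List.map_congr_left (fun x hx => ?_) |>.trans L.map_id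
  by_cases hdown : x = 1 - (k : ℤ)
  · simp [hdown]
  · obtain rfl := (hL x hx).resolve_right hdown
    simp [hdown]

def block (k : ℕ) (s : Finset ℕ) : List ℤ :=
  (List.range k).map fun i => if i ∈ s then 1 - (k : ℤ) else 1

def downSet (k : ℕ) (B : List ℤ) : Finset ℕ := {i ∈ range k | B.getD i 0 = 1 - (k : ℤ)}

variable {k a r : ℕ} {s : Finset ℕ}

@[simp]
theorem length_block : (block k s).length = k := by simp [block]

theorem getD_block {i : ℕ} (hi : i < k) :
    (block k s).getD i 0 = if i ∈ s then 1 - (k : ℤ) else 1 := by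
  simp [block, hi]

theorem mem_block {x : ℤ} (hx : x ∈ block k s) : x = 1 ∨ x = 1 - (k : ℤ) := by
  simp only [block, List.mem_map] at hx
  obtain ⟨i, -, rfl⟩ := hx
  split_ifs <;> simp

theorem sum_take_block {t : ℕ} (ht : t ≤ k) :
    ((block k s).take t).sum = t - k * #{i ∈ range t | i ∈ s} := by
  have hite : ∀ i, (if i ∈ s then 1 - (k : ℤ) else 1) = 1 - k * if i ∈ s then 1 else 0 :=
    fun i => by split_ifs <;> ring
  calc ((block k s).take t).sum
      = ∑ i ∈ range t, (if i ∈ s then 1 - (k : ℤ) else 1) := by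
        rw [block, ← List.map_take, List.take_range, min_eq_left ht]
        rfl
    _ = t - k * #{i ∈ range t | i ∈ s} := by
        simp only [hite, sum_sub_distrib, ← mul_sum, sum_boole, sum_const, card_range,
          nsmul_eq_mul, mul_one]

theorem sum_block (hs : s ⊆ range k) : (block k s).sum = k - k * #s := by
  rw [← List.take_of_length_le length_block.le, sum_take_block le_rfl, filter_mem_eq_inter,
    inter_eq_right.mpr hs]

theorem downSet_block (hs : s ⊆ range k) : downSet k (block k s) = s := by
  ext i
  simp only [downSet, mem_filter, mem_range]
  constructor
  · rintro ⟨hi, h⟩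
    rw [getD_block hi] at h
    split_ifs at h with his
    · exact his
    · omega
  · intro hi
    have hik := mem_range.mp (hs hi)
    exact ⟨hik, by rw [getD_block hik, if_pos hi]⟩

theorem block_downSet {B : List ℤ} (hlen : B.length = k) (hB : ∀ x ∈ B, x = 1 ∨ x = 1 - (k : ℤ)) :
    block k (downSet k B) = B := by
  refine List.ext_getElem (by simp [hlen]) fun i h₁ h₂ => ?_
  rw [← List.getD_eq_getElem _ 0 h₁, ← List.getD_eq_getElem _ 0 h₂]
  have hi : i < k := by simpa using h₁
  simp only [getD_block hi, downSet, mem_filter, mem_range, hi, true_and,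
    List.getD_eq_getElem _ 0 h₂]
  split_ifs with hdown
  · exact hdown.symm
  · exact ((hB _ (List.getElem_mem h₂)).resolve_right hdown).symm

/-- The block `block k s` ends with `U^r D_{k-1}`. -/
def HasFinalPeak (k r : ℕ) (s : Finset ℕ) : Prop :=
  k - 1 ∈ s ∧ s ⊆ insert (k - 1) (range (k - 1 - r))

theorem hasFinalPeak_iff_getD (hk : 1 ≤ k) (hr : r < k) (hs : s ⊆ range k) :
    HasFinalPeak k r s ↔ (∀ j < r, (block k s).getD (k - 1 - r + j) 0 = 1) ∧
      (block k s).getD (k - 1) 0 = 1 - k := by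
  have hup : ∀ i < k, (block k s).getD i 0 = 1 ↔ i ∉ s := fun i hi => by
    rw [getD_block hi]; split_ifs <;> simp_all; omega
  have hdown : (block k s).getD (k - 1) 0 = 1 - k ↔ k - 1 ∈ s := by
    rw [getD_block (by omega)]; split_ifs <;> simp_all; omega
  rw [HasFinalPeak, hdown, and_comm]
  refine and_congr_left fun _ => ⟨fun hsub j hj => (hup _ (by omega)).mpr fun hmem => ?_,
    fun h x hx => ?_⟩
  · have := hsub hmem
    simp only [mem_insert, mem_range] at this
    omega
  · have hxk := mem_range.mp (hs hx)
    rw [mem_insert, mem_range]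
    by_contra! hne
    have := h (x - (k - 1 - r)) (by omega)
    rw [show k - 1 - r + (x - (k - 1 - r)) = x by omega, hup x hxk] at this
    exact this hx

theorem hasHill_append_block_iff (hk : 1 ≤ k) (hr : r < k) {P : List ℤ}
    (hP : ∀ x ∈ P, x = 1 ∨ x = 1 - (k : ℤ)) (hlen : k ∣ P.length) (hs : s ⊆ range k) :
    HasHill k r (P ++ block k s) ↔
      HasHill k r P ∨ ((P ++ block k s).sum = 0 ∧ HasFinalPeak k r s) := by
  rw [hasFinalPeak_iff_getD hk hr hs]
  constructor
  · rintro ⟨i, hi, hup, hdown, hsum⟩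
    rw [List.length_append, length_block] at hi
    rcases lt_or_ge (i + r) P.length with h | h
    · refine .inl ⟨i, h, fun j hj => ?_, ?_, ?_⟩
      · rw [← List.getD_append P (block k s) 0 _ (by omega)]; exact hup j hj
      · rw [← List.getD_append P (block k s) 0 _ h]; exact hdown
      · rwa [← List.take_append_of_le_length (by omega)]
    · have hsteps : ∀ x ∈ P ++ block k s, x = 1 ∨ x = 1 - (k : ℤ) := by
        simpa only [List.forall_mem_append] using ⟨hP, fun x => mem_block⟩
      have hdvd := dvd_of_sum_take_eq_zero hsteps (by simp; omega) hsum
      -- a hill ends after a multiple of `k` steps, so inside the last block only at its end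
      have hend : i + r + 1 = P.length + k := by
        have := Nat.le_of_dvd (by omega) (Nat.dvd_sub hdvd hlen)
        omega
      refine .inr ⟨by rwa [hend, List.take_of_length_le (by simp)] at hsum, fun j hj => ?_, ?_⟩
      · have := hup j hj
        rwa [List.getD_append_right _ _ _ _ (by omega),
          show i + j - P.length = k - 1 - r + j by omega] at this
      · rwa [List.getD_append_right _ _ _ _ (by omega),
          show i + r - P.length = k - 1 by omega] at hdown
  · rintro (⟨i, hi, hup, hdown, hsum⟩ | ⟨hsum, hup, hdown⟩)
    · refine ⟨i, by simp; omega, fun j hj => ?_, ?_, ?_⟩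
      · rw [List.getD_append _ _ _ _ (by omega)]; exact hup j hj
      · rw [List.getD_append _ _ _ _ hi]; exact hdown
      · rwa [List.take_append_of_le_length (by omega)]
    · refine ⟨P.length + (k - 1 - r), by simp; omega, fun j hj => ?_, ?_, ?_⟩
      · rw [List.getD_append_right _ _ _ _ (by omega),
          show P.length + (k - 1 - r) + j - P.length = k - 1 - r + j by omega]
        exact hup j hj
      · rwa [List.getD_append_right _ _ _ _ (by omega),
          show P.length + (k - 1 - r) + r - P.length = k - 1 by omega]
      · rwa [List.take_of_length_le (by simp; omega)]

def FineSet (k a r n m : ℕ) : Set (List ℤ) := {L | L ∈ DyckSet k a n m ∧ ¬ HasHill k r L}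

/-- `block k s` can close a `(k,r)`-Fine path of depth `a` and semiheight `m`: the prefix then
ends at height `k (m + #s - 1)`. -/
def AdmissibleBlock (k a r m : ℕ) (s : Finset ℕ) : Prop :=
  1 ≤ m + #s ∧
    (∀ t ≤ k, -(a : ℤ) ≤ k * ((m : ℤ) + #s - 1) + ((block k s).take t).sum) ∧
    ¬ (m = 0 ∧ HasFinalPeak k r s)

theorem append_block_mem_fineSet_iff (hk : 1 ≤ k) (ha : a < k) (hr : r < k) {n m : ℕ}
    {P : List ℤ} (hPlen : P.length = k * n) (hP : ∀ x ∈ P, x = 1 ∨ x = 1 - (k : ℤ))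
    (hs : s ⊆ range k) :
    P ++ block k s ∈ FineSet k a r (n + 1) m ↔
      AdmissibleBlock k a r m s ∧ P ∈ FineSet k a r n (m + #s - 1) := by
  have hdvd : k ∣ P.length := hPlen ▸ dvd_mul_right k n
  simp only [FineSet, DyckSet, AdmissibleBlock, Set.mem_ofPred_eq, List.length_append,
    length_block, List.sum_append, sum_block hs, List.forall_mem_append,
    forall_le_sum_take_append, hasHill_append_block_iff hk hr hP hdvd hs]
  constructor
  · rintro ⟨⟨-, hsum, -, hdepP, hdepB⟩, hhill⟩
    have hPsum : P.sum = k * ((m : ℤ) + #s - 1) := by linarith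
    have hmc : 1 ≤ m + #s := by
      by_contra hmc
      have hend := hdepP P.length
      rw [List.take_length, hPsum, show (m : ℤ) + #s = 0 by omega] at hend
      omega
    refine ⟨⟨hmc, fun t ht => hPsum ▸ hdepB t ht, fun ⟨hm, hpeak⟩ => hhill (.inr ⟨?_, hpeak⟩)⟩,
      ⟨hPlen, ?_, hP, hdepP⟩, fun h => hhill (.inl h)⟩
    · rw [hsum, hm, Nat.cast_zero, mul_zero]
    · rw [hPsum, Nat.cast_sub hmc]
      push_cast
      ring
  · rintro ⟨⟨hmc, hdepB, hpeak⟩, ⟨-, hPsum, -, hdepP⟩, hhill⟩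
    replace hPsum : P.sum = k * ((m : ℤ) + #s - 1) := by
      rw [hPsum, Nat.cast_sub hmc]
      push_cast
      ring
    refine ⟨⟨by rw [hPlen]; ring, by rw [hPsum]; ring, ⟨hP, fun x => mem_block⟩, hdepP,
      fun t ht => hPsum ▸ hdepB t ht⟩, ?_⟩
    rintro (h | ⟨h0, hpeak'⟩)
    · exact hhill h
    · have hkm : (k : ℤ) * m = 0 := by rw [hPsum] at h0; linarith
      exact hpeak ⟨by exact_mod_cast (mul_eq_zero.mp hkm).resolve_left (by omega), hpeak'⟩

theorem finite_fineSet (k a r n m : ℕ) : (FineSet k a r n m).Finite :=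
  (finite_setOf_steps k (k * n)).subset fun _ hL => ⟨hL.1.1, hL.1.2.2.1⟩

theorem take_append_block_downSet {n : ℕ} {L : List ℤ} (hlen : L.length = k * (n + 1))
    (hL : ∀ x ∈ L, x = 1 ∨ x = 1 - (k : ℤ)) :
    L.take (k * n) ++ block k (downSet k (L.drop (k * n))) = L := by
  rw [block_downSet (by simp [hlen, mul_add]) fun x hx => hL x (List.mem_of_mem_drop hx),
    List.take_append_drop]

open scoped Classical in
theorem card_fineSet_succ (hk : 1 ≤ k) (ha : a < k) (hr : r < k) (n m : ℕ) :
    Nat.card (FineSet k a r (n + 1) m) =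
      ∑ s ∈ (range k).powerset with AdmissibleBlock k a r m s,
        Nat.card (FineSet k a r n (m + #s - 1)) := by
  set S := (range k).powerset.filter (AdmissibleBlock k a r m)
  have hS : ∀ s ∈ S, s ⊆ range k ∧ AdmissibleBlock k a r m s := fun s hs => by
    simpa only [S, mem_filter, mem_powerset] using hs
  let g : (Σ s : S, FineSet k a r n (m + #s.1 - 1)) → FineSet k a r (n + 1) m := fun x =>
    ⟨x.2.1 ++ block k x.1.1, (append_block_mem_fineSet_iff hk ha hr x.2.2.1.1 x.2.2.1.2.2.1
      (hS _ x.1.2).1).2 ⟨(hS _ x.1.2).2, x.2.2⟩⟩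
  have hg : Function.Bijective g := by
    refine ⟨fun ⟨⟨s, hs⟩, ⟨P, hP⟩⟩ ⟨⟨s', hs'⟩, ⟨P', hP'⟩⟩ h => ?_, fun L => ?_⟩
    · obtain ⟨rfl, hb⟩ := List.append_inj (Subtype.ext_iff.mp h) (by rw [hP.1.1, hP'.1.1])
      obtain rfl : s = s' := by
        rw [← downSet_block (hS s hs).1, hb, downSet_block (hS s' hs').1]
      rfl
    · have hL := take_append_block_downSet L.2.1.1 L.2.1.2.2.1
      have hmem := (append_block_mem_fineSet_iff hk ha hr (by simp [L.2.1.1, mul_add])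
        (fun x hx => L.2.1.2.2.1 x (List.mem_of_mem_take hx)) (filter_subset _ _)).1 (hL ▸ L.2)
      exact ⟨⟨⟨_, mem_filter.mpr ⟨mem_powerset.mpr (filter_subset _ _), hmem.1⟩⟩,
        ⟨_, hmem.2⟩⟩, Subtype.ext hL⟩
  have : ∀ s : S, Finite (FineSet k a r n (m + #s.1 - 1)) := fun _ =>
    (finite_fineSet k a r n _).to_subtype
  rw [← Nat.card_congr (Equiv.ofBijective g hg), Nat.card_sigma]
  exact sum_coe_sort S fun s => Nat.card (FineSet k a r n (m + #s - 1))

theorem admissibleBlock_of_one_le {m : ℕ} (hm : 1 ≤ m) : AdmissibleBlock k a r m s := by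
  refine ⟨by omega, fun t ht => ?_, fun h => by omega⟩
  have hd : #{i ∈ range t | i ∈ s} ≤ #s := card_le_card fun i hi => (mem_filter.mp hi).2
  rw [sum_take_block ht]
  have h1 : (0 : ℤ) ≤ k * ((#s : ℤ) - #{i ∈ range t | i ∈ s}) :=
    mul_nonneg (by positivity) (sub_nonneg.mpr (by exact_mod_cast hd))
  have h2 : (0 : ℤ) ≤ k * ((m : ℤ) - 1) := mul_nonneg (by positivity) (by omega)
  linarith

theorem depth_block_zero_iff (ha : a < k) :
    (∀ t ≤ k, -(a : ℤ) ≤ k * ((#s : ℤ) - 1) + ((block k s).take t).sum) ↔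
      ¬ s ⊆ range (k - a - 1) := by
  constructor
  · intro h hsub
    have := h (k - a - 1) (by omega)
    rw [sum_take_block (by omega), filter_mem_eq_inter, inter_eq_right.mpr hsub] at this
    rw [show ((k - a - 1 : ℕ) : ℤ) = k - a - 1 by omega] at this
    linarith
  · intro hnsub t ht
    obtain ⟨i, his, hi⟩ := not_subset.mp hnsub
    rw [mem_range, not_lt] at hi
    rw [sum_take_block ht]
    rcases lt_or_ge i t with hit | hit
    · have hd : #{i ∈ range t | i ∈ s} ≤ #s := card_le_card fun i hi => (mem_filter.mp hi).2
      have : (0 : ℤ) ≤ k * ((#s : ℤ) - #{i ∈ range t | i ∈ s}) :=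
        mul_nonneg (by positivity) (sub_nonneg.mpr (by exact_mod_cast hd))
      have : (k : ℤ) - a ≤ t := by omega
      linarith
    · have hd : #{i ∈ range t | i ∈ s} < #s :=
        card_lt_card ⟨fun i hi => (mem_filter.mp hi).2,
          fun hsub => by have := hsub his; simp at this; omega⟩
      have : (0 : ℤ) ≤ k * ((#s : ℤ) - 1 - #{i ∈ range t | i ∈ s}) :=
        mul_nonneg (by positivity) (by omega)
      linarith

theorem admissibleBlock_zero_iff (ha : a < k) :
    AdmissibleBlock k a r 0 s ↔ s.Nonempty ∧ ¬ s ⊆ range (k - a - 1) ∧ ¬ HasFinalPeak k r s := by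
  simp only [AdmissibleBlock, zero_add, Nat.cast_zero, one_le_card, true_and,
    depth_block_zero_iff ha]

theorem filter_powersetCard_subset {α : Type*} [DecidableEq α] {U V : Finset α} (hVU : V ⊆ U)
    (j : ℕ) :
    {s ∈ powersetCard j U | s ⊆ V} = powersetCard j V := by
  ext s
  simp only [mem_filter, mem_powersetCard]
  exact ⟨fun ⟨⟨_, hj⟩, hV⟩ => ⟨hV, hj⟩, fun ⟨hV, hj⟩ => ⟨⟨hV.trans hVU, hj⟩, hV⟩⟩

open scoped Classical in
theorem card_filter_hasFinalPeak (hr : r < k) {j : ℕ} (hj : 1 ≤ j) :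
    #{s ∈ powersetCard j (range k) | HasFinalPeak k r s} = (k - r - 1).choose (j - 1) := by
  have hlast : k - 1 ∉ range (k - 1 - r) := by simp
  have himage : {s ∈ powersetCard j (range k) | HasFinalPeak k r s} =
      (powersetCard (j - 1) (range (k - 1 - r))).image (insert (k - 1)) := by
    ext s
    simp only [HasFinalPeak, mem_filter, mem_powersetCard, mem_image, subset_insert_iff]
    constructor
    · rintro ⟨⟨-, hcard⟩, hmem, hsub⟩
      exact ⟨s.erase (k - 1), ⟨hsub, by rw [card_erase_of_mem hmem, hcard]⟩, insert_erase hmem⟩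
    · rintro ⟨t, ⟨ht, hcard⟩, rfl⟩
      have hnot : k - 1 ∉ t := fun h => hlast (ht h)
      refine ⟨⟨insert_subset (by simp; omega) (ht.trans (range_subset_range.mpr (by omega))),
        by rw [card_insert_of_notMem hnot, hcard]; omega⟩, mem_insert_self _ _, ?_⟩
      rwa [erase_insert hnot]
  rw [himage, card_image_of_injOn, card_powersetCard, card_range, Nat.sub_right_comm]
  intro t ht t' ht' h
  have hnot : ∀ u ∈ (powersetCard (j - 1) (range (k - 1 - r)) : Set (Finset ℕ)), k - 1 ∉ u :=
    fun u hu h => hlast ((mem_powersetCard.mp hu).1 h)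
  rw [← erase_insert (hnot t ht), h, erase_insert (hnot t' ht')]

open scoped Classical in
theorem card_filter_admissibleBlock_zero (ha : a < k) (hr : r < k) {j : ℕ} (hj : 1 ≤ j) :
    #{s ∈ powersetCard j (range k) | AdmissibleBlock k a r 0 s} =
      k.choose j - (k - a - 1).choose j - (k - r - 1).choose (j - 1) := by
  set T := powersetCard j (range k)
  have hfilter : {s ∈ T | AdmissibleBlock k a r 0 s} =
      {s ∈ T | ¬ (s ⊆ range (k - a - 1) ∨ HasFinalPeak k r s)} := filter_congr fun s hs => by
    have hne : s.Nonempty := card_pos.mp (by rw [(mem_powersetCard.mp hs).2]; omega)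
    rw [admissibleBlock_zero_iff ha, not_or, and_iff_right hne]
  have hdisj : Disjoint {s ∈ T | s ⊆ range (k - a - 1)} {s ∈ T | HasFinalPeak k r s} :=
    disjoint_filter.mpr fun s _ hsub hpeak => by
      have := hsub hpeak.1
      simp only [mem_range] at this
      omega
  have hsplit := card_filter_add_card_filter_not (s := T)
    (fun s => s ⊆ range (k - a - 1) ∨ HasFinalPeak k r s)
  rw [filter_or, card_union_of_disjoint hdisj,
    filter_powersetCard_subset (range_subset_range.mpr (by omega)), card_filter_hasFinalPeak hr hj,
    card_powersetCard, card_range, card_powersetCard, card_range] at hsplit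
  rw [hfilter]
  omega

theorem sum_filter_powerset_apply_card {α M : Type*} [AddCommMonoid M] (p : Finset α → Prop)
    [DecidablePred p] (f : ℕ → M) (x : Finset α) :
    ∑ s ∈ x.powerset with p s, f #s =
      ∑ j ∈ range (#x + 1), #{s ∈ powersetCard j x | p s} • f j := by
  rw [sum_filter, sum_powerset]
  refine sum_congr rfl fun j _ => ?_
  rw [← sum_filter, sum_congr rfl fun s hs => by rw [(mem_powersetCard.mp (mem_filter.mp hs).1).2],
    sum_const]

theorem F_eq_card_fineSet (k a r n m : ℕ) : F k a r n m = Nat.card (FineSet k a r n m) := rfl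

open scoped Classical in
theorem F_succ (hk : 1 ≤ k) (ha : a < k) (hr : r < k) (n m : ℕ) :
    F k a r (n + 1) m = ∑ j ∈ range (k + 1),
      #{s ∈ powersetCard j (range k) | AdmissibleBlock k a r m s} * F k a r n (m + j - 1) := by
  simp only [F_eq_card_fineSet]
  rw [card_fineSet_succ hk ha hr, sum_filter_powerset_apply_card _
    (fun j => Nat.card (FineSet k a r n (m + j - 1))), card_range]
  simp only [smul_eq_mul]

end FinePath

theorem fine_recursion_general (k a r : ℕ) (hk : 2 ≤ k) (ha : a ≤ k - 1)
    (hr2 : r ≤ k - 1) (n : ℕ) (hn : 1 ≤ n) :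
    (∀ m : ℕ, 1 ≤ m →
      F k a r n m = ∑ j ∈ Finset.range (k + 1), k.choose j * F k a r (n - 1) (m - 1 + j)) ∧
    F k a r n 0 =
      ∑ j ∈ Finset.Icc 1 k,
        (k.choose j - (k - a - 1).choose j - (k - r - 1).choose (j - 1)) *
          F k a r (n - 1) (j - 1) := by
  classical
  obtain ⟨n, rfl⟩ : ∃ n', n = n' + 1 := ⟨n - 1, by omega⟩
  have hrec := FinePath.F_succ (k := k) (a := a) (r := r) (by omega) (by omega) (by omega) n
  rw [Nat.add_sub_cancel]
  refine ⟨fun m hm => ?_, ?_⟩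
  · rw [hrec]
    refine sum_congr rfl fun j _ => ?_
    rw [filter_true_of_mem fun s _ => FinePath.admissibleBlock_of_one_le hm, card_powersetCard,
      card_range, show m + j - 1 = m - 1 + j by omega]
  · have hempty : #{s ∈ powersetCard 0 (range k) | FinePath.AdmissibleBlock k a r 0 s} = 0 := by
      simp [FinePath.AdmissibleBlock]
    rw [hrec, range_eq_Ico, sum_eq_sum_Ico_succ_bot (by omega), hempty, zero_mul, zero_add]
    refine sum_congr rfl fun j hj => ?_
    rw [mem_Icc] at hj
    rw [FinePath.card_filter_admissibleBlock_zero (by omega) (by omega) hj.1, zero_add]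

/-- Recursion for generalized `(k,r)`-Fine paths of depth `a`. -/
theorem fine_recursion (k a r : ℕ) (hk : 2 ≤ k) (ha : a ≤ k - 1)
    (hr1 : 1 ≤ r) (hr2 : r ≤ k - 1) (n : ℕ) (hn : 1 ≤ n) :
    (∀ m : ℕ, 1 ≤ m →
      F k a r n m = ∑ j ∈ Finset.range (k + 1), k.choose j * F k a r (n - 1) (m - 1 + j)) ∧
    F k a r n 0 =
      ∑ j ∈ Finset.Icc 1 k,
        (k.choose j - (k - a - 1).choose j - (k - r - 1).choose (j - 1)) *
          F k a r (n - 1) (j - 1) :=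
  fine_recursion_general k a r hk ha hr2 n hn
end
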